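/- arXiv:1301.5108 — 11 statements merged into one kernel-verified Lean document; each statement's English description precedes it below -/
import Mathlib

section
/- Let M be a k × n binary matrix with k ≤ n. Then the condition that for every subset J ⊆ [n] with |J| ≤ k, the union of the column supports C_j for j ∈ J has size at least |J|, is equivalent to the condition that for every nonempty subset I ⊆ [k], the union of the row supports R_i for i ∈ I has size at least n − k + |I|. -/
/-- Support of row `i` of a binary matrix. -/
def rowSupp {k n : ℕ} (M : Fin k → Fin n → Bool) (i : Fin k) : Finset (Fin n) :=
  Finset.univ.filter (fun j => M i j = true)

/-- Support of column `j` of a binary matrix. -/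
def colSupp {k n : ℕ} (M : Fin k → Fin n → Bool) (j : Fin n) : Finset (Fin k) :=
  Finset.univ.filter (fun i => M i j = true)

/-- Weight (number of ones) of column `j`. -/
def colW {k n : ℕ} (M : Fin k → Fin n → Bool) (j : Fin n) : ℕ :=
  (colSupp M j).card

/-- Condition (P3): every nonempty set `I` of rows has union of supports of size
at least `n - k + |I|`. -/
def P3 {k n : ℕ} (M : Fin k → Fin n → Bool) : Prop :=
  ∀ I : Finset (Fin k), I.Nonempty → n - k + I.card ≤ (I.biUnion (rowSupp M)).card

/-- The matrix obtained from `M` by swapping the entries `(i, jmax)` and `(i, jmin)`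
of row `i` (setting the former to `0` and the latter to `1`). -/
def swapEntries {k n : ℕ} (M : Fin k → Fin n → Bool) (i : Fin k) (jmax jmin : Fin n) :
    Fin k → Fin n → Bool :=
  fun r c => if r = i then (if c = jmax then false else if c = jmin then true else M r c)
             else M r c

theorem stmt_0 (k n : ℕ) (hkn : k ≤ n) (M : Fin k → Fin n → Bool) :
    (∀ J : Finset (Fin n), J.card ≤ k → J.card ≤ (J.biUnion (colSupp M)).card) ↔
    (∀ I : Finset (Fin k), I.Nonempty → n - k + I.card ≤ (I.biUnion (rowSupp M)).card) := by
  constructor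
  · intro h1 I hI
    set T := (I.biUnion (rowSupp M))ᶜ with hT
    have hTsub : ∀ j ∈ T, colSupp M j ⊆ Iᶜ := by
      intro j hj i hi
      simp only [hT, Finset.mem_compl, Finset.mem_biUnion, not_exists, not_and] at hj
      simp only [colSupp, Finset.mem_filter] at hi
      simp only [Finset.mem_compl]
      intro hiI
      exact (by simpa [rowSupp, hi.2] using hj i hiI)
    have hIc : Iᶜ.card = k - I.card := by
      simp [Finset.card_compl]
    have hIpos : 1 ≤ I.card := Finset.card_pos.mpr hI
    have hIle : I.card ≤ k := by simpa using Finset.card_le_univ I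
    have hTle : T.card ≤ k - I.card := by
      by_contra hc
      push_neg at hc
      obtain ⟨J, hJT, hJcard⟩ := Finset.exists_subset_card_eq (show k - I.card + 1 ≤ T.card by omega)
      have hJk : J.card ≤ k := by omega
      have := h1 J hJk
      have hsub : J.biUnion (colSupp M) ⊆ Iᶜ := by
        intro i hi
        simp only [Finset.mem_biUnion] at hi
        obtain ⟨j, hjJ, hji⟩ := hi
        exact hTsub j (hJT hjJ) hji
      have := this.trans (Finset.card_le_card hsub)
      rw [hIc] at this
      omega
    have hbn : (I.biUnion (rowSupp M)).card ≤ n := by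
      simpa using Finset.card_le_univ (I.biUnion (rowSupp M))
    have hcard : T.card = n - (I.biUnion (rowSupp M)).card := by
      have h := Finset.card_compl (s := I.biUnion (rowSupp M))
      simpa [hT] using h
    have hTn : T.card ≤ n := by simpa using Finset.card_le_univ T
    omega
  · intro h3 J hJ
    set U := J.biUnion (colSupp M) with hU
    have hUle : U.card ≤ k := by simpa using Finset.card_le_univ U
    have hJn : J.card ≤ n := by simpa using Finset.card_le_univ J
    rcases Finset.eq_empty_or_nonempty Uᶜ with he | hne
    · have : U.card = k := by
        have := Finset.card_compl (s := U)
        rw [he] at this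
        simp at this
        omega
      omega
    · have h := h3 Uᶜ hne
      have hUc : Uᶜ.card = k - U.card := by simp [Finset.card_compl]
      have hsub : Uᶜ.biUnion (rowSupp M) ⊆ Jᶜ := by
        intro j hj
        simp only [Finset.mem_biUnion] at hj
        obtain ⟨i, hiU, hij⟩ := hj
        simp only [Finset.mem_compl]
        intro hjJ
        apply Finset.mem_compl.mp hiU
        rw [hU]
        apply Finset.mem_biUnion.mpr ⟨j, hjJ, ?_⟩
        simp only [colSupp, Finset.mem_filter, Finset.mem_univ, true_and]
        simpa [rowSupp] using hij
      have hle := Finset.card_le_card hsub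
      have hJc : (Jᶜ : Finset (Fin n)).card = n - J.card := by simp [Finset.card_compl]
      omega
end

section
/- Let M be a k × n binary matrix in which every row has weight exactly n − k + 1 and which satisfies condition (P3): for every nonempty I ⊆ [k], |∪_{i∈I} R_i| ≥ n − k + |I|. Suppose columns j_max and j_min have weights w_max and w_min respectively with w_max − w_min ≥ 2. Then there exists a row i with M(i, j_max) = 1 and M(i, j_min) = 0 such that the matrix M' obtained from M by setting M'(i, j_max) = 0 and M'(i, j_min) = 1 (and agreeing with M elsewhere) still satisfies (P3). -/
/-- For two critical sets with nonempty intersection, the union of supports over the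
intersection equals the intersection of the unions of supports. -/
lemma inter_biUnion_eq {k n : ℕ} (M : Fin k → Fin n → Bool) (hP3 : P3 M)
    (I I' : Finset (Fin k)) (hne : (I ∩ I').Nonempty)
    (hI : (I.biUnion (rowSupp M)).card ≤ n - k + I.card)
    (hI' : (I'.biUnion (rowSupp M)).card ≤ n - k + I'.card) :
    ((I ∩ I').biUnion (rowSupp M)) = (I.biUnion (rowSupp M)) ∩ (I'.biUnion (rowSupp M)) := by
  have hsub : ((I ∩ I').biUnion (rowSupp M)) ⊆
      (I.biUnion (rowSupp M)) ∩ (I'.biUnion (rowSupp M)) := by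
    apply Finset.subset_inter
    · exact Finset.biUnion_subset_biUnion_of_subset_left _ Finset.inter_subset_left
    · exact Finset.biUnion_subset_biUnion_of_subset_left _ Finset.inter_subset_right
  apply Finset.eq_of_subset_of_card_le hsub
  have h2 : ((I ∪ I').biUnion (rowSupp M)) =
      (I.biUnion (rowSupp M)) ∪ (I'.biUnion (rowSupp M)) := by
    ext j
    simp only [Finset.mem_biUnion, Finset.mem_union]
    constructor
    · rintro ⟨a, ha | ha, hj⟩
      · exact Or.inl ⟨a, ha, hj⟩
      · exact Or.inr ⟨a, ha, hj⟩
    · rintro (⟨a, ha, hj⟩ | ⟨a, ha, hj⟩)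
      · exact ⟨a, Or.inl ha, hj⟩
      · exact ⟨a, Or.inr ha, hj⟩
  have hunion_ne : (I ∪ I').Nonempty := by
    obtain ⟨x, hx⟩ := hne
    exact ⟨x, Finset.mem_union_left _ (Finset.mem_inter.mp hx).1⟩
  have h3 := hP3 (I ∪ I') hunion_ne
  rw [h2] at h3
  have h4 := hP3 (I ∩ I') hne
  have h1 := Finset.card_union_add_card_inter (I.biUnion (rowSupp M)) (I'.biUnion (rowSupp M))
  have h5 := Finset.card_union_add_card_inter I I'
  omega

/-- If row `i` has no "bad witness", then the swap preserves P3. -/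
lemma good_swap {k n : ℕ} (M : Fin k → Fin n → Bool) (hP3 : P3 M)
    (i : Fin k) (jmax jmin : Fin n) (hne : jmax ≠ jmin)
    (hi1 : M i jmax = true) (hi2 : M i jmin = false)
    (hno : ¬ ∃ I : Finset (Fin k), i ∈ I ∧ (∀ r ∈ I, M r jmax = true → r = i) ∧
      (∃ b ∈ I, M b jmin = true) ∧ (I.biUnion (rowSupp M)).card ≤ n - k + I.card) :
    P3 (swapEntries M i jmax jmin) := by
  intro I hI
  by_cases hiI : i ∈ I
  · set M' := swapEntries M i jmax jmin with hM'
    set U := I.biUnion (rowSupp M) with hU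
    set U' := I.biUnion (rowSupp M') with hU'
    have hsub : U.erase jmax ⊆ U' := by
      intro j hj
      have hjne : j ≠ jmax := Finset.ne_of_mem_erase hj
      have hjU : j ∈ U := Finset.mem_of_mem_erase hj
      rw [hU, Finset.mem_biUnion] at hjU
      obtain ⟨r, hrI, hjr⟩ := hjU
      simp only [rowSupp, Finset.mem_filter, Finset.mem_univ, true_and] at hjr
      rw [hU', Finset.mem_biUnion]
      refine ⟨r, hrI, ?_⟩
      simp only [rowSupp, Finset.mem_filter, Finset.mem_univ, true_and]
      by_cases hri : r = i
      · subst hri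
        simp only [hM', swapEntries, if_pos rfl, if_neg hjne]
        by_cases hj2 : j = jmin <;> simp [hj2, hjr]
      · simp [hM', swapEntries, hri, hjr]
    have hjminU' : jmin ∈ U' := by
      rw [hU', Finset.mem_biUnion]
      refine ⟨i, hiI, ?_⟩
      simp [rowSupp, hM', swapEntries, Ne.symm hne]
    by_cases ha : ∃ r ∈ I, r ≠ i ∧ M r jmax = true
    · have hUsub : U ⊆ U' := by
        intro j hj
        by_cases hjne : j = jmax
        · subst hjne
          obtain ⟨r, hrI, hri, hr⟩ := ha
          rw [hU', Finset.mem_biUnion]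
          exact ⟨r, hrI, by simp [rowSupp, hM', swapEntries, hri, hr]⟩
        · exact hsub (Finset.mem_erase.mpr ⟨hjne, hj⟩)
      calc n - k + I.card ≤ U.card := hP3 I hI
        _ ≤ U'.card := Finset.card_le_card hUsub
    · have h1 : U.card ≤ (U.erase jmax).card + 1 := by
        by_cases hm : jmax ∈ U
        · rw [Finset.card_erase_of_mem hm]
          have : 1 ≤ U.card := Finset.card_pos.mpr ⟨jmax, hm⟩
          omega
        · rw [Finset.erase_eq_of_notMem hm]; omega
      have hcle := Finset.card_le_card hsub
      by_cases hb : jmin ∈ U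
      · have hall : ∀ r ∈ I, M r jmax = true → r = i := by
          intro r hr hrm
          by_contra hri
          exact ha ⟨r, hr, hri, hrm⟩
        rw [hU, Finset.mem_biUnion] at hb
        obtain ⟨bb, hbI, hbj⟩ := hb
        have hbm : M bb jmin = true := by
          simpa [rowSupp] using hbj
        by_cases hc : U.card ≤ n - k + I.card
        · exact absurd ⟨I, hiI, hall, ⟨bb, hbI, hbm⟩, hc⟩ hno
        · omega
      · have hjm : jmin ∉ U.erase jmax := fun h => hb (Finset.mem_of_mem_erase h)
        have h2 : insert jmin (U.erase jmax) ⊆ U' := Finset.insert_subset hjminU' hsub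
        have h3 : (insert jmin (U.erase jmax)).card = (U.erase jmax).card + 1 :=
          Finset.card_insert_of_notMem hjm
        have h4 := Finset.card_le_card h2
        have h5 : n - k + I.card ≤ U.card := hP3 I hI
        omega
  · have heq : I.biUnion (rowSupp (swapEntries M i jmax jmin)) = I.biUnion (rowSupp M) := by
      apply Finset.biUnion_congr rfl
      intro r hr
      have hri : r ≠ i := fun h => hiI (h ▸ hr)
      ext j
      simp [rowSupp, swapEntries, hri]
    rw [heq]
    exact hP3 I hI

theorem stmt_3 (k n : ℕ) (hkn : k ≤ n) (M : Fin k → Fin n → Bool)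
    (hrow : ∀ i, (rowSupp M i).card = n - k + 1)
    (hP3 : P3 M)
    (jmax jmin : Fin n)
    (hw : colW M jmin + 2 ≤ colW M jmax) :
    ∃ i : Fin k, M i jmax = true ∧ M i jmin = false ∧ P3 (swapEntries M i jmax jmin) := by
  classical
  set A := colSupp M jmax with hA
  set B := colSupp M jmin with hB
  have hne : jmax ≠ jmin := by
    intro h
    rw [h] at hw
    unfold colW at hw
    omega
  have hmemA : ∀ r, r ∈ A ↔ M r jmax = true := by
    intro r; simp [hA, colSupp]
  have hmemB : ∀ r, r ∈ B ↔ M r jmin = true := by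
    intro r; simp [hB, colSupp]
  by_contra hcon
  have key : ∀ i ∈ A \ B, ∃ I : Finset (Fin k), i ∈ I ∧
      (∀ r ∈ I, M r jmax = true → r = i) ∧
      (∃ b ∈ I, M b jmin = true) ∧ (I.biUnion (rowSupp M)).card ≤ n - k + I.card := by
    intro i hi
    have hi1 : M i jmax = true := (hmemA i).mp (Finset.mem_sdiff.mp hi).1
    have hi2 : M i jmin = false := by
      have := (Finset.mem_sdiff.mp hi).2
      rw [hmemB] at this
      exact Bool.eq_false_iff.mpr this
    by_contra hno
    exact hcon ⟨i, hi1, hi2, good_swap M hP3 i jmax jmin hne hi1 hi2 hno⟩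
  choose! F hF using key
  have key2 : ∀ i ∈ A \ B, ∃ b, b ∈ F i ∧ M b jmin = true := by
    intro i hi
    obtain ⟨b, hb1, hb2⟩ := (hF i hi).2.2.1
    exact ⟨b, hb1, hb2⟩
  choose! bfun hb1 hb2 using key2
  have hmaps : ∀ i ∈ A \ B, bfun i ∈ B \ A := by
    intro i hi
    rw [Finset.mem_sdiff]
    refine ⟨(hmemB _).mpr (hb2 i hi), ?_⟩
    intro hmem
    have hbmax : M (bfun i) jmax = true := (hmemA _).mp hmem
    have heq : bfun i = i := (hF i hi).2.1 (bfun i) (hb1 i hi) hbmax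
    have hi2 : M i jmin = false := by
      have := (Finset.mem_sdiff.mp hi).2
      rw [hmemB] at this
      exact Bool.eq_false_iff.mpr this
    have hbx := hb2 i hi
    rw [heq, hi2] at hbx
    exact Bool.false_ne_true hbx
  have hinj : Set.InjOn bfun ↑(A \ B) := by
    intro x hx y hy hxy
    by_contra hxyne
    rw [Finset.mem_coe] at hx hy
    have hK : (F x ∩ F y).Nonempty :=
      ⟨bfun x, Finset.mem_inter.mpr ⟨hb1 x hx, hxy ▸ hb1 y hy⟩⟩
    have hEq := inter_biUnion_eq M hP3 (F x) (F y) hK (hF x hx).2.2.2 (hF y hy).2.2.2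
    have hxA : M x jmax = true := (hmemA x).mp (Finset.mem_sdiff.mp hx).1
    have hyA : M y jmax = true := (hmemA y).mp (Finset.mem_sdiff.mp hy).1
    have hjx : jmax ∈ (F x).biUnion (rowSupp M) :=
      Finset.mem_biUnion.mpr ⟨x, (hF x hx).1, by simp [rowSupp, hxA]⟩
    have hjy : jmax ∈ (F y).biUnion (rowSupp M) :=
      Finset.mem_biUnion.mpr ⟨y, (hF y hy).1, by simp [rowSupp, hyA]⟩
    have hjK : jmax ∈ (F x ∩ F y).biUnion (rowSupp M) := by
      rw [hEq]
      exact Finset.mem_inter.mpr ⟨hjx, hjy⟩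
    obtain ⟨r, hr, hrj⟩ := Finset.mem_biUnion.mp hjK
    have hrm : M r jmax = true := by simpa [rowSupp] using hrj
    have hrx : r = x := (hF x hx).2.1 r (Finset.mem_inter.mp hr).1 hrm
    have hry : r = y := (hF y hy).2.1 r (Finset.mem_inter.mp hr).2 hrm
    exact hxyne (hrx ▸ hry)
  have hcard := Finset.card_le_card_of_injOn bfun hmaps hinj
  have e1 := Finset.card_sdiff_add_card_inter A B
  have e2 := Finset.card_sdiff_add_card_inter B A
  have e3 : (A ∩ B).card = (B ∩ A).card := by rw [Finset.inter_comm]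
  have hw' : B.card + 2 ≤ A.card := hw
  omega
end

section
/- Let M be a k × n binary matrix satisfying (P3): for every nonempty I ⊆ [k], |∪_{i∈I} R_i| ≥ n − k + |I|. Fix a row i and columns j_max, j_min with M(i, j_max) = 1 and M(i, j_min) = 0, and let M^(i) be obtained by swapping these two entries of row i. Suppose I ⊆ [k] with i ∉ I is such that {i} ∪ I violates (P3) in M^(i). Then j_min ∈ ∪_{r∈I} R_r. -/
theorem stmt_5 (k n : ℕ) (hkn : k ≤ n) (M : Fin k → Fin n → Bool)
    (hP3 : P3 M)
    (i : Fin k) (jmax jmin : Fin n)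
    (h1 : M i jmax = true) (h0 : M i jmin = false)
    (I : Finset (Fin k)) (hiI : i ∉ I)
    (hviol : ((insert i I).biUnion (rowSupp (swapEntries M i jmax jmin))).card ≤ n - k + I.card) :
    jmin ∈ I.biUnion (rowSupp M) := by
  by_contra hmem
  have hmemR : ∀ j r, j ∈ rowSupp M r ↔ M r j = true := by
    intro j r; simp [rowSupp]
  have hmemR' : ∀ j r, j ∈ rowSupp (swapEntries M i jmax jmin) r ↔
      swapEntries M i jmax jmin r j = true := by
    intro j r; simp [rowSupp]
  set V := (insert i I).biUnion (rowSupp M) with hVdef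
  set U := (insert i I).biUnion (rowSupp (swapEntries M i jmax jmin)) with hUdef
  have hne : jmin ≠ jmax := by
    intro h; rw [h, h1] at h0; exact absurd h0 (by simp)
  have hV : n - k + I.card + 1 ≤ V.card := by
    have := hP3 (insert i I) ⟨i, Finset.mem_insert_self i I⟩
    rwa [Finset.card_insert_of_notMem hiI, ← add_assoc] at this
  have hjmaxV : jmax ∈ V := by
    exact Finset.mem_biUnion.2 ⟨i, Finset.mem_insert_self i I, (hmemR _ _).2 h1⟩
  have hjminV : jmin ∉ V := by
    intro h
    rcases Finset.mem_biUnion.1 h with ⟨r, hr, hjr⟩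
    rcases Finset.mem_insert.1 hr with rfl | hrI
    · rw [hmemR] at hjr; rw [h0] at hjr; exact absurd hjr (by simp)
    · exact hmem (Finset.mem_biUnion.2 ⟨r, hrI, hjr⟩)
  have hsub : insert jmin (V.erase jmax) ⊆ U := by
    intro x hx
    rcases Finset.mem_insert.1 hx with rfl | hx
    · refine Finset.mem_biUnion.2 ⟨i, Finset.mem_insert_self i I, (hmemR' _ _).2 ?_⟩
      simp [swapEntries, hne]
    · obtain ⟨hxne, hxV⟩ := Finset.mem_erase.1 hx
      rcases Finset.mem_biUnion.1 hxV with ⟨r, hr, hxr⟩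
      refine Finset.mem_biUnion.2 ⟨r, hr, (hmemR' _ _).2 ?_⟩
      rw [hmemR] at hxr
      by_cases hri : r = i
      · subst hri
        simp only [swapEntries, if_pos rfl, if_neg hxne]
        by_cases hxm : x = jmin
        · simp [hxm]
        · simp [hxm, hxr]
      · simpa [swapEntries, hri] using hxr
  have hcard : V.card ≤ U.card := by
    calc V.card = (V.erase jmax).card + 1 := by
          rw [Finset.card_erase_of_mem hjmaxV]
          have : 1 ≤ V.card := Finset.card_pos.2 ⟨jmax, hjmaxV⟩
          omega
      _ = (insert jmin (V.erase jmax)).card := by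
          rw [Finset.card_insert_of_notMem (fun h => hjminV (Finset.mem_of_mem_erase h))]
      _ ≤ U.card := Finset.card_le_card hsub
  omega
end

section
/- Let M be a k × n binary matrix satisfying (P3). With the setup of the single-entry swap at row i (moving a 1 from column j_max to column j_min), suppose I ⊆ [k], i ∉ I, is such that {i} ∪ I violates (P3) in the swapped matrix M^(i), i.e., |R'_i ∪ R_I| ≤ n − k + |I|, where R_I = ∪_{r∈I} R_r. Then equality holds: |R'_i ∪ R_I| = n − k + |I|. -/
theorem stmt_6 (k n : ℕ) (hkn : k ≤ n) (M : Fin k → Fin n → Bool)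
    (hP3 : P3 M)
    (i : Fin k) (jmax jmin : Fin n)
    (h1 : M i jmax = true) (h0 : M i jmin = false)
    (I : Finset (Fin k)) (hiI : i ∉ I)
    (hviol : ((insert i I).biUnion (rowSupp (swapEntries M i jmax jmin))).card ≤ n - k + I.card) :
    ((insert i I).biUnion (rowSupp (swapEntries M i jmax jmin))).card = n - k + I.card := by
  set S := (insert i I).biUnion (rowSupp M) with hS
  set S' := (insert i I).biUnion (rowSupp (swapEntries M i jmax jmin)) with hS'
  have hsub : S \ {jmax} ⊆ S' := by
    intro j hj
    rw [Finset.mem_sdiff, Finset.mem_singleton] at hj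
    obtain ⟨hjS, hjne⟩ := hj
    rw [hS, Finset.mem_biUnion] at hjS
    obtain ⟨r, hr, hjr⟩ := hjS
    rw [hS', Finset.mem_biUnion]
    refine ⟨r, hr, ?_⟩
    simp only [rowSupp, Finset.mem_filter, Finset.mem_univ, true_and] at hjr ⊢
    unfold swapEntries
    by_cases hri : r = i
    · simp [hri, hjne]
      exact Or.inr (hri ▸ hjr)
    · simp [hri, hjr]
  have hcard : S.card ≤ (S \ {jmax}).card + 1 := by
    calc S.card ≤ (S \ {jmax}).card + ({jmax} : Finset (Fin n)).card :=
          Finset.card_le_card_sdiff_add_card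
      _ = (S \ {jmax}).card + 1 := by rw [Finset.card_singleton]
  have hlow : n - k + I.card + 1 ≤ S.card := by
    have := hP3 (insert i I) ⟨i, Finset.mem_insert_self i I⟩
    rwa [Finset.card_insert_of_notMem hiI, ← add_assoc] at this
  have h2 : (S \ {jmax}).card ≤ S'.card := Finset.card_le_card hsub
  omega
end

section
/- Let M be a k × n binary matrix in which every row has weight exactly n − k + 1 and which satisfies (P3). Fix columns j_max and j_min, and let t ≥ 2 be such that rows 1,…,t are exactly the rows with a 1 in column j_max and a 0 in column j_min. For each i ∈ [t], suppose the swap of entries (i, j_max) and (i, j_min) breaks (P3), and let I_i ⊆ [k] \ {i} be a minimal set such that {i} ∪ I_i violates (P3) in the swapped matrix M^(i). Then I_1, …, I_t are pairwise disjoint. -/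
/-- A set `S` of rows violates (P3) in matrix `N`. -/
def violates {k n : ℕ} (N : Fin k → Fin n → Bool) (S : Finset (Fin k)) : Prop :=
  (S.biUnion (rowSupp N)).card ≤ n - k + S.card - 1

open Finset

lemma swap_row_self {k n : ℕ} (M : Fin k → Fin n → Bool) (i : Fin k) (jmax jmin : Fin n)
    (hne : jmax ≠ jmin) :
    rowSupp (swapEntries M i jmax jmin) i = insert jmin ((rowSupp M i).erase jmax) := by
  ext j
  simp only [rowSupp, swapEntries, mem_filter, mem_univ, true_and, mem_insert, mem_erase,
    if_pos rfl]
  by_cases h1 : j = jmax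
  · subst h1; simp [hne, Ne.symm]
  · by_cases h2 : j = jmin
    · subst h2; simp [h1]
    · simp [h1, h2]

lemma swap_row_other {k n : ℕ} (M : Fin k → Fin n → Bool) (i r : Fin k) (jmax jmin : Fin n)
    (h : r ≠ i) : rowSupp (swapEntries M i jmax jmin) r = rowSupp M r := by
  ext j; simp [rowSupp, swapEntries, h]

lemma swap_biUnion {k n : ℕ} (M : Fin k → Fin n → Bool) (i : Fin k) (jmax jmin : Fin n)
    (I : Finset (Fin k)) (hiI : i ∉ I) :
    I.biUnion (rowSupp (swapEntries M i jmax jmin)) = I.biUnion (rowSupp M) := by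
  apply Finset.biUnion_congr rfl
  intro r hr
  exact swap_row_other M i r jmax jmin (fun h => hiI (h ▸ hr))

lemma key {k n : ℕ} (M : Fin k → Fin n → Bool) (hP3 : P3 M)
    (jmax jmin : Fin n) (hne : jmax ≠ jmin)
    (i : Fin k) (hmax : M i jmax = true) (hmin' : M i jmin = false)
    (hw : (rowSupp M i).card = n - k + 1)
    (I : Finset (Fin k)) (hiI : i ∉ I)
    (hv : violates (swapEntries M i jmax jmin) (insert i I)) :
    I.Nonempty ∧ jmax ∉ I.biUnion (rowSupp M) ∧
    rowSupp M i ⊆ insert jmax (I.biUnion (rowSupp M)) ∧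
    (I.biUnion (rowSupp M)).card ≤ n - k + I.card := by
  set m := n - k with hm
  set Ri := rowSupp M i with hRi
  set A := I.biUnion (rowSupp M) with hA
  have hjmaxRi : jmax ∈ Ri := by simp [hRi, rowSupp, hmax]
  have hjminRi : jmin ∉ Ri := by simp [hRi, rowSupp, hmin']
  -- compute the biUnion in the swapped matrix
  have hX : (insert i I).biUnion (rowSupp (swapEntries M i jmax jmin))
      = insert jmin (Ri.erase jmax) ∪ A := by
    rw [Finset.biUnion_insert, swap_biUnion M i jmax jmin I hiI,
      swap_row_self M i jmax jmin hne]
  set X := insert jmin (Ri.erase jmax) ∪ A with hXdef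
  have hcardins : (insert i I).card = I.card + 1 := Finset.card_insert_of_notMem hiI
  have hv' : X.card ≤ m + I.card := by
    have := hv
    unfold violates at this
    rw [hX, hcardins] at this
    omega
  -- I is nonempty
  have hInonempty : I.Nonempty := by
    rcases I.eq_empty_or_nonempty with h | h
    · exfalso
      have hAe : A = ∅ := by rw [hA, h]; simp
      have hXe : X = insert jmin (Ri.erase jmax) := by rw [hXdef, hAe, union_empty]
      have h1 : jmin ∉ Ri.erase jmax := fun hmem => hjminRi (Finset.mem_of_mem_erase hmem)
      have h2 : (Ri.erase jmax).card = m := by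
        rw [Finset.card_erase_of_mem hjmaxRi, hw]; omega
      have h3 : X.card = m + 1 := by
        rw [hXe, Finset.card_insert_of_notMem h1, h2]
      rw [h] at hv'
      simp at hv'
      omega
    · exact h
  have hP3I : m + I.card ≤ A.card := hP3 I hInonempty
  have hP3Si : m + I.card + 1 ≤ (Ri ∪ A).card := by
    have h := hP3 (insert i I) ⟨i, Finset.mem_insert_self i I⟩
    rw [Finset.biUnion_insert, hcardins] at h
    rw [hm, hRi, hA]
    omega
  have hsub : Ri ∪ A ⊆ insert jmax X := by
    intro j hj
    rcases Finset.mem_union.mp hj with hj | hj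
    · by_cases h1 : j = jmax
      · exact Finset.mem_insert.mpr (Or.inl h1)
      · exact Finset.mem_insert.mpr (Or.inr (Finset.mem_union_left _
          (Finset.mem_insert.mpr (Or.inr (Finset.mem_erase.mpr ⟨h1, hj⟩)))))
    · exact Finset.mem_insert.mpr (Or.inr (Finset.mem_union_right _ hj))
  have hcard1 : (Ri ∪ A).card ≤ X.card + 1 :=
    le_trans (Finset.card_le_card hsub) (Finset.card_insert_le _ _)
  -- jmax ∉ X
  have hjmaxX : jmax ∉ X := by
    intro hmem
    have : Ri ∪ A ⊆ X := by
      rwa [Finset.insert_eq_self.mpr hmem] at hsub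
    have := Finset.card_le_card this
    omega
  have hjmaxA : jmax ∉ A := fun h => hjmaxX (Finset.mem_union_right _ h)
  -- split union card
  have hsplit : (Ri \ A).card + A.card = (Ri ∪ A).card := Finset.card_sdiff_add_card ..
  have hjmaxdiff : jmax ∈ Ri \ A := Finset.mem_sdiff.mpr ⟨hjmaxRi, hjmaxA⟩
  have hge1 : 1 ≤ (Ri \ A).card := Finset.card_pos.mpr ⟨jmax, hjmaxdiff⟩
  have hAle : A.card ≤ m + I.card := by omega
  have hdiff1 : (Ri \ A).card ≤ 1 := by omega
  have hRisub : Ri ⊆ insert jmax A := by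
    intro j hj
    by_cases hjA : j ∈ A
    · exact Finset.mem_insert.mpr (Or.inr hjA)
    · have hjd : j ∈ Ri \ A := Finset.mem_sdiff.mpr ⟨hj, hjA⟩
      have := Finset.card_le_one.mp hdiff1 j hjd jmax hjmaxdiff
      exact Finset.mem_insert.mpr (Or.inl this)
  exact ⟨hInonempty, hjmaxA, hRisub, hAle⟩

theorem stmt_7 (k n : ℕ) (hkn : k ≤ n) (M : Fin k → Fin n → Bool)
    (hrow : ∀ i, (rowSupp M i).card = n - k + 1)
    (hP3 : P3 M)
    (jmax jmin : Fin n)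
    (T : Finset (Fin k))
    (hT : T = Finset.univ.filter (fun i => M i jmax = true ∧ M i jmin = false))
    (ht : 2 ≤ T.card)
    (Ifam : Fin k → Finset (Fin k))
    (hnotmem : ∀ i ∈ T, i ∉ Ifam i)
    (hviol : ∀ i ∈ T, violates (swapEntries M i jmax jmin) (insert i (Ifam i)))
    (hmin : ∀ i ∈ T, ∀ I' ⊂ Ifam i, ¬ violates (swapEntries M i jmax jmin) (insert i I')) :
    ∀ i ∈ T, ∀ i' ∈ T, i ≠ i' → Disjoint (Ifam i) (Ifam i') := by
  intro i hi i' hi' hii'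
  have hmemT : ∀ r ∈ T, M r jmax = true ∧ M r jmin = false := by
    intro r hr; rw [hT] at hr; exact (Finset.mem_filter.mp hr).2
  obtain ⟨hmaxi, hmini⟩ := hmemT i hi
  obtain ⟨hmaxi', hmini'⟩ := hmemT i' hi'
  have hne : jmax ≠ jmin := by
    intro h; rw [h] at hmaxi; rw [hmaxi] at hmini; exact Bool.true_eq_false.mp hmini
  obtain ⟨hne1, hjmax1, hRsub1, hcard1⟩ := key M hP3 jmax jmin hne i hmaxi hmini (hrow i)
    (Ifam i) (hnotmem i hi) (hviol i hi)
  obtain ⟨hne2, hjmax2, hRsub2, hcard2⟩ := key M hP3 jmax jmin hne i' hmaxi' hmini' (hrow i')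
    (Ifam i') (hnotmem i' hi') (hviol i' hi')
  by_contra hdisj
  obtain ⟨r, hr1, hr2⟩ := Finset.not_disjoint_iff.mp hdisj
  set m := n - k with hm
  set A1 := (Ifam i).biUnion (rowSupp M) with hA1
  set A2 := (Ifam i').biUnion (rowSupp M) with hA2
  -- i ∉ Ifam i' and i' ∉ Ifam i
  have hii2 : i ∉ Ifam i' := fun h => hjmax2 (Finset.mem_biUnion.mpr
    ⟨i, h, by simp [rowSupp, hmaxi]⟩)
  have hii1 : i' ∉ Ifam i := fun h => hjmax1 (Finset.mem_biUnion.mpr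
    ⟨i', h, by simp [rowSupp, hmaxi']⟩)
  set Y := Ifam i ∪ Ifam i' with hY
  set D := Ifam i ∩ Ifam i' with hD
  have hDne : D.Nonempty := ⟨r, Finset.mem_inter.mpr ⟨hr1, hr2⟩⟩
  set U := insert i (insert i' Y) with hU
  have hiY : i ∉ Y := fun h => (Finset.mem_union.mp h).elim (hnotmem i hi) hii2
  have hi'Y : i' ∉ Y := fun h => (Finset.mem_union.mp h).elim hii1 (hnotmem i' hi')
  have hUcard : U.card = Y.card + 2 := by
    have h1 : i ∉ insert i' Y := by
      simp only [Finset.mem_insert]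
      push_neg
      exact ⟨hii', hiY⟩
    rw [hU, Finset.card_insert_of_notMem h1, Finset.card_insert_of_notMem hi'Y]
  -- cover of Y
  have hcovY : Y.biUnion (rowSupp M) = A1 ∪ A2 := by
    ext j
    simp only [hY, hA1, hA2, Finset.mem_biUnion, Finset.mem_union]
    constructor
    · rintro ⟨s, hs | hs, hjs⟩
      · exact Or.inl ⟨s, hs, hjs⟩
      · exact Or.inr ⟨s, hs, hjs⟩
    · rintro (⟨s, hs, hjs⟩ | ⟨s, hs, hjs⟩)
      · exact ⟨s, Or.inl hs, hjs⟩
      · exact ⟨s, Or.inr hs, hjs⟩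
  -- cover of D is inside A1 ∩ A2
  have hcovD : D.biUnion (rowSupp M) ⊆ A1 ∩ A2 := by
    intro j hj
    obtain ⟨s, hs, hjs⟩ := Finset.mem_biUnion.mp hj
    rw [hD, Finset.mem_inter] at hs
    exact Finset.mem_inter.mpr ⟨Finset.mem_biUnion.mpr ⟨s, hs.1, hjs⟩,
      Finset.mem_biUnion.mpr ⟨s, hs.2, hjs⟩⟩
  have hP3D : m + D.card ≤ (D.biUnion (rowSupp M)).card := hP3 D hDne
  have hintercard : m + D.card ≤ (A1 ∩ A2).card :=
    le_trans hP3D (Finset.card_le_card hcovD)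
  have hunionadd : (A1 ∪ A2).card + (A1 ∩ A2).card = A1.card + A2.card :=
    Finset.card_union_add_card_inter _ _
  have hYD : Y.card + D.card = (Ifam i).card + (Ifam i').card :=
    Finset.card_union_add_card_inter _ _
  have hcovYcard : (A1 ∪ A2).card ≤ m + Y.card := by omega
  -- cover of U
  have hcovU : U.biUnion (rowSupp M) ⊆ insert jmax (A1 ∪ A2) := by
    rw [hU, Finset.biUnion_insert, Finset.biUnion_insert, hcovY]
    intro j hj
    rcases Finset.mem_union.mp hj with hj | hj
    · exact Finset.insert_subset_insert _ Finset.subset_union_left (hRsub1 hj)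
    · rcases Finset.mem_union.mp hj with hj | hj
      · exact Finset.insert_subset_insert _ Finset.subset_union_right (hRsub2 hj)
      · exact Finset.mem_insert.mpr (Or.inr hj)
  have hP3U : m + U.card ≤ (U.biUnion (rowSupp M)).card :=
    hP3 U ⟨i, Finset.mem_insert_self _ _⟩
  have hfinal : (U.biUnion (rowSupp M)).card ≤ (A1 ∪ A2).card + 1 :=
    le_trans (Finset.card_le_card hcovU) (Finset.card_insert_le _ _)
  omega
end

section
/- Let M be a k × n binary matrix satisfying (P3), with the swap setup at row i (columns j_max, j_min, where M(i,j_max)=1, M(i,j_min)=0). Suppose I ⊆ [k] \ {i} is minimal such that {i} ∪ I violates (P3) in the swapped matrix M^(i). Then for every ℓ ∈ I: |R'_i ∪ R_{I \ {ℓ}}| = n − k + |I| and R_ℓ ⊆ R'_i ∪ R_{I \ {ℓ}}, where R'_i = (R_i \ {j_max}) ∪ {j_min} and R_J = ∪_{r∈J} R_r. -/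
theorem stmt_8 (k n : ℕ) (hkn : k ≤ n) (M : Fin k → Fin n → Bool)
    (hP3 : P3 M)
    (i : Fin k) (jmax jmin : Fin n)
    (h1 : M i jmax = true) (h0 : M i jmin = false)
    (I : Finset (Fin k)) (hiI : i ∉ I)
    (hviol : violates (swapEntries M i jmax jmin) (insert i I))
    (hmin : ∀ I' ⊂ I, ¬ violates (swapEntries M i jmax jmin) (insert i I')) :
    ∀ ℓ ∈ I,
      (((rowSupp M i \ {jmax}) ∪ {jmin}) ∪ (I.erase ℓ).biUnion (rowSupp M)).card = n - k + I.card ∧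
      rowSupp M ℓ ⊆ ((rowSupp M i \ {jmax}) ∪ {jmin}) ∪ (I.erase ℓ).biUnion (rowSupp M) := by
  intro l hl
  set N := swapEntries M i jmax jmin with hN
  have hsuppne : ∀ r : Fin k, r ≠ i → rowSupp N r = rowSupp M r := by
    intro r hr
    ext j
    simp [rowSupp, N, swapEntries, hr]
  have hjne : jmax ≠ jmin := by
    intro h; rw [h, h0] at h1; exact absurd h1 (by simp)
  have hsuppi : rowSupp N i = (rowSupp M i \ {jmax}) ∪ {jmin} := by
    ext j
    simp only [rowSupp, N, swapEntries, Finset.mem_filter, Finset.mem_univ, true_and,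
      Finset.mem_union, Finset.mem_sdiff, Finset.mem_singleton, if_pos rfl]
    by_cases hj1 : j = jmax
    · simp [hj1, hjne]
    · by_cases hj2 : j = jmin <;> simp [hj1, hj2, Ne.symm hjne]
  have hbiU : ∀ J : Finset (Fin k), i ∉ J →
      (insert i J).biUnion (rowSupp N)
        = ((rowSupp M i \ {jmax}) ∪ {jmin}) ∪ J.biUnion (rowSupp M) := by
    intro J hiJ
    rw [Finset.biUnion_insert, hsuppi]
    congr 1
    apply Finset.biUnion_congr rfl
    intro r hr
    exact hsuppne r (fun h => hiJ (h ▸ hr))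
  set A := (insert i (I.erase l)).biUnion (rowSupp N) with hA
  set B := (insert i I).biUnion (rowSupp N) with hB
  have hAB : A ⊆ B := Finset.biUnion_subset_biUnion_of_subset_left _
    (Finset.insert_subset_insert _ (Finset.erase_subset _ _))
  have hcardB : B.card ≤ n - k + I.card := by
    have this : B.card ≤ n - k + (insert i I).card - 1 := hviol
    rw [Finset.card_insert_of_notMem hiI] at this
    omega
  have hIpos : 1 ≤ I.card := Finset.card_pos.2 ⟨l, hl⟩
  have hcardA : n - k + I.card ≤ A.card := by
    have hne : ¬ violates N (insert i (I.erase l)) := hmin _ (Finset.erase_ssubset hl)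
    have hne' : ¬ (A.card ≤ n - k + (insert i (I.erase l)).card - 1) := hne
    rw [Finset.card_insert_of_notMem (fun h => hiI (Finset.erase_subset _ _ h)),
      Finset.card_erase_of_mem hl] at hne'
    omega
  have hAeqB : A = B :=
    Finset.eq_of_subset_of_card_le hAB (le_trans hcardB hcardA)
  have hAform : A = ((rowSupp M i \ {jmax}) ∪ {jmin}) ∪ (I.erase l).biUnion (rowSupp M) :=
    hbiU _ (fun h => hiI (Finset.erase_subset _ _ h))
  constructor
  · rw [← hAform]
    exact le_antisymm (hAeqB ▸ hcardB) hcardA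
  · rw [← hAform, hAeqB]
    have : rowSupp M l = rowSupp N l := (hsuppne l (fun h => hiI (h ▸ hl))).symm
    rw [this]
    exact Finset.subset_biUnion_of_mem (rowSupp N) (Finset.mem_insert_of_mem hl)
end

section
/- For 1 ≤ k ≤ n there exists a k × n binary matrix M such that: (P1) every row of M has weight exactly n − k + 1; (P2) the weights of any two columns of M differ by at most 1; and (P3) for every nonempty subset I ⊆ [k], the union of the row supports R_i, i ∈ I, has cardinality at least n − k + |I|. -/
namespace S9








variable {n : ℕ}

lemma zval_sub [NeZero n] {a b : ZMod n} (h : b.val ≤ a.val) :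
    (a - b).val = a.val - b.val := by
  have h1 : a - b = ((a.val - b.val : ℕ) : ZMod n) := by
    rw [Nat.cast_sub h, ZMod.natCast_val, ZMod.natCast_val, ZMod.cast_id, ZMod.cast_id]
  rw [h1, ZMod.val_cast_of_lt (lt_of_le_of_lt (Nat.sub_le _ _) (ZMod.val_lt a))]

lemma zval_add_one [NeZero n] {x : ZMod n} (h : x.val + 1 < n) :
    (x + 1).val = x.val + 1 := by
  have h1 : x + 1 = ((x.val + 1 : ℕ) : ZMod n) := by
    rw [Nat.cast_add, Nat.cast_one, ZMod.natCast_val, ZMod.cast_id]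
  rw [h1, ZMod.val_cast_of_lt h]

lemma zcast_mod (a : ℕ) [NeZero n] : ((a % n : ℕ) : ZMod n) = (a : ZMod n) := by
  conv_rhs => rw [← Nat.mod_add_div a n]
  push_cast [ZMod.natCast_self]
  ring

lemma zcast_neg_one_val [NeZero n] (hn : 1 ≤ n) : ((-1 : ZMod n)).val = n - 1 := by
  have h1 : (-1 : ZMod n) = ((n - 1 : ℕ) : ZMod n) := by
    rw [Nat.cast_sub hn, ZMod.natCast_self, Nat.cast_one, zero_sub]
  rw [h1, ZMod.val_cast_of_lt (by omega)]



/-- start of row i's zero-arc -/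
def s (k n : ℕ) (i : Fin k) : ℕ := (i : ℕ) * n / k

/-- cyclic distance from the arc start to column j -/
def dd (k n : ℕ) (i : Fin k) (j : Fin n) : ℕ :=
  (((j : ℕ) : ZMod n) - ((s k n i : ℕ) : ZMod n)).val

lemma s_lt (k n : ℕ) (hk : 1 ≤ k) (hn : 1 ≤ n) (i : Fin k) : s k n i < n := by
  have hi : (i : ℕ) ≤ k - 1 := by omega
  have h2 : (i : ℕ) * n < n * k := by
    have h1 : (i : ℕ) * n ≤ (k - 1) * n := Nat.mul_le_mul_right _ hi
    have h3 : (k - 1) * n = k * n - n := by rw [Nat.sub_mul, one_mul]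
    have h4 : n * k = k * n := Nat.mul_comm _ _
    have h5 : n ≤ k * n := Nat.le_mul_of_pos_left _ hk
    omega
  exact (Nat.div_lt_iff_lt_mul hk).mpr h2

lemma s_strictMono (k n : ℕ) (hkn : k ≤ n) {i i' : Fin k} (h : (i : ℕ) < (i' : ℕ)) :
    s k n i < s k n i' := by
  have hk : 0 < k := i.pos
  show (i : ℕ) * n / k < (i' : ℕ) * n / k
  have h1 : (i : ℕ) * n / k + 1 ≤ ((i : ℕ) * n + n) / k := by
    rw [Nat.le_div_iff_mul_le hk, add_mul, one_mul]
    have h2 := Nat.div_mul_le_self ((i : ℕ) * n) k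
    omega
  have h3 : ((i : ℕ) * n + n) / k ≤ (i' : ℕ) * n / k := by
    apply Nat.div_le_div_right
    have h4 : ((i : ℕ) + 1) * n ≤ (i' : ℕ) * n := Nat.mul_le_mul_right _ h
    have e : ((i : ℕ) + 1) * n = (i : ℕ) * n + n := by ring
    omega
  omega

lemma s_inj (k n : ℕ) (hkn : k ≤ n) {i i' : Fin k} (h : s k n i = s k n i') : i = i' := by
  rcases lt_trichotomy (i : ℕ) (i' : ℕ) with h1 | h1 | h1
  · exact absurd h (Nat.ne_of_lt (s_strictMono k n hkn h1))
  · exact Fin.ext h1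
  · exact absurd h.symm (Nat.ne_of_lt (s_strictMono k n hkn h1))


def V (k n : ℕ) (I : Finset (Fin k)) : Finset (Fin n) :=
  Finset.univ.filter (fun j => ∀ i ∈ I, dd k n i j < k - 1)

lemma cast_fin_inj {n : ℕ} [NeZero n] {j j' : Fin n}
    (h : ((j : ℕ) : ZMod n) = ((j' : ℕ) : ZMod n)) : j = j' := by
  have h1 := congrArg ZMod.val h
  rw [ZMod.val_cast_of_lt j.isLt, ZMod.val_cast_of_lt j'.isLt] at h1
  exact Fin.ext h1

lemma key (k n : ℕ) (hk : 1 ≤ k) (hkn : k ≤ n) :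
    ∀ m : ℕ, ∀ I : Finset (Fin k), I.card = m + 1 → (V k n I).card + I.card ≤ k := by
  have hn : 1 ≤ n := hk.trans hkn
  haveI : NeZero n := ⟨by omega⟩
  intro m
  induction m with
  | zero =>
    intro I hI
    obtain ⟨i0, rfl⟩ := Finset.card_eq_one.mp hI
    have hcard : (V k n {i0}).card ≤ k - 1 := by
      have this : (V k n {i0}).card ≤ (Finset.range (k - 1)).card :=
        Finset.card_le_card_of_injOn (fun j => dd k n i0 j)
        (fun j hj => by
          have hj2 := (Finset.mem_filter.mp hj).2 i0 (Finset.mem_singleton_self i0)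
          exact Finset.mem_range.mpr hj2)
        (fun j hj j' hj' hdd => by
          apply cast_fin_inj (n := n)
          have : ((j : ℕ) : ZMod n) - ((s k n i0 : ℕ) : ZMod n)
              = ((j' : ℕ) : ZMod n) - ((s k n i0 : ℕ) : ZMod n) :=
            ZMod.val_injective n hdd
          exact sub_left_injective this
        )
      have h9 : (Finset.range (k - 1)).card = k - 1 := Finset.card_range _
      omega
    simp only [Finset.card_singleton]
    omega
  | succ m ih =>
    intro I hI
    rcases (V k n I).eq_empty_or_nonempty with hV | ⟨c, hc⟩
    · rw [hV]
      simp only [Finset.card_empty, Nat.zero_add]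
      have := Finset.card_le_univ I
      simp only [Finset.card_univ, Fintype.card_fin] at this
      omega
    · have hInon : I.Nonempty := Finset.card_pos.mp (by omega)
      obtain ⟨i0, hi0I, hmin⟩ := I.exists_min_image (fun i => dd k n i c) hInon
      have hcmem := Finset.mem_filter.mp hc
      set I' := I.erase i0 with hI'
      have hI'card : I'.card = m + 1 := by
        rw [hI', Finset.card_erase_of_mem hi0I]; omega
      -- the new column c' = s i0 - 1
      set c' : Fin n := ⟨(s k n i0 + (n - 1)) % n, Nat.mod_lt _ (by omega)⟩ with hc'
      have hc'cast : ((c' : ℕ) : ZMod n) = ((s k n i0 : ℕ) : ZMod n) - 1 := by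
        show (((s k n i0 + (n - 1)) % n : ℕ) : ZMod n) = _
        rw [zcast_mod, Nat.cast_add, Nat.cast_sub hn, ZMod.natCast_self, Nat.cast_one]
        ring
      have hddc' : ∀ i ∈ I', dd k n i c' < k - 1 := by
        intro i hi
        have hiI : i ∈ I := Finset.mem_of_mem_erase hi
        have hine : i ≠ i0 := Finset.ne_of_mem_erase hi
        have ha : dd k n i c < k - 1 := hcmem.2 i hiI
        have hb : dd k n i0 c < k - 1 := hcmem.2 i0 hi0I
        have hmin' : dd k n i0 c ≤ dd k n i c := hmin i hiI
        have hne : dd k n i0 c ≠ dd k n i c := by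
          intro h
          apply hine
          apply s_inj k n hkn
          have h2 : ((c : ℕ) : ZMod n) - ((s k n i : ℕ) : ZMod n)
              = ((c : ℕ) : ZMod n) - ((s k n i0 : ℕ) : ZMod n) :=
            ZMod.val_injective n h.symm
          have h3 : ((s k n i : ℕ) : ZMod n) = ((s k n i0 : ℕ) : ZMod n) :=
            sub_right_injective h2
          have h4 := congrArg ZMod.val h3
          rw [ZMod.val_cast_of_lt (s_lt k n hk hn i),
            ZMod.val_cast_of_lt (s_lt k n hk hn i0)] at h4
          exact h4
        set a : ZMod n := ((c : ℕ) : ZMod n) - ((s k n i : ℕ) : ZMod n) with hadef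
        set b : ZMod n := ((c : ℕ) : ZMod n) - ((s k n i0 : ℕ) : ZMod n) with hbdef
        have hb1 : (b + 1).val = b.val + 1 := zval_add_one (by
          have : b.val < k - 1 := hb
          omega)
        have hsub : ((c' : ℕ) : ZMod n) - ((s k n i : ℕ) : ZMod n) = a - (b + 1) := by
          rw [hc'cast, hadef, hbdef]; ring
        have h5 : b.val < a.val := lt_of_le_of_ne hmin' hne
        have hblea : (b + 1).val ≤ a.val := by rw [hb1]; omega
        show (((c' : ℕ) : ZMod n) - ((s k n i : ℕ) : ZMod n)).val < k - 1
        rw [hsub, zval_sub hblea, hb1]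
        have h6 : a.val < k - 1 := ha
        omega
      have hc'notmem : c' ∉ V k n I := by
        intro hmem
        have h1 := (Finset.mem_filter.mp hmem).2 i0 hi0I
        have h2 : dd k n i0 c' = n - 1 := by
          show (((c' : ℕ) : ZMod n) - ((s k n i0 : ℕ) : ZMod n)).val = n - 1
          rw [hc'cast]
          have : ((s k n i0 : ℕ) : ZMod n) - 1 - ((s k n i0 : ℕ) : ZMod n) = -1 := by ring
          rw [this, zcast_neg_one_val hn]
        omega
      have hsubset : insert c' (V k n I) ⊆ V k n I' := by
        intro x hx
        rcases Finset.mem_insert.mp hx with rfl | hx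
        · exact Finset.mem_filter.mpr ⟨Finset.mem_univ _, hddc'⟩
        · have := Finset.mem_filter.mp hx
          exact Finset.mem_filter.mpr
            ⟨Finset.mem_univ _, fun i hi => this.2 i (Finset.mem_of_mem_erase hi)⟩
      have hccard : (V k n I).card + 1 ≤ (V k n I').card := by
        rw [← Finset.card_insert_of_notMem hc'notmem]
        exact Finset.card_le_card hsubset
      have := ih I' hI'card
      omega


def Mm (k n : ℕ) : Fin k → Fin n → Bool :=
  fun i j => decide (k - 1 ≤ dd k n i j)

lemma dd_eq_mod (k n : ℕ) (hk : 1 ≤ k) (hkn : k ≤ n) (i : Fin k) (j : Fin n) :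
    dd k n i j = ((j : ℕ) + (n - s k n i)) % n := by
  have hn : 1 ≤ n := hk.trans hkn
  haveI : NeZero n := ⟨by omega⟩
  have hs := s_lt k n hk hn i
  have h1 : (((j : ℕ) + (n - s k n i) : ℕ) : ZMod n)
      = ((j : ℕ) : ZMod n) - ((s k n i : ℕ) : ZMod n) := by
    rw [Nat.cast_add, Nat.cast_sub (le_of_lt hs), ZMod.natCast_self]
    ring
  show (((j : ℕ) : ZMod n) - ((s k n i : ℕ) : ZMod n)).val = _
  rw [← h1, ZMod.val_natCast]

/-- pointwise description of the zero predicate, for column counting -/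
lemma dd_lt_iff (k n : ℕ) (hk : 1 ≤ k) (hkn : k ≤ n) (i : Fin k) (j : Fin n) :
    dd k n i j < k - 1 ↔
      (s k n i ≤ (j : ℕ) ∧ (j : ℕ) < s k n i + (k - 1)) ∨
        ((j : ℕ) + n < s k n i + (k - 1)) := by
  have hn : 1 ≤ n := hk.trans hkn
  have hs := s_lt k n hk hn i
  have hj := j.isLt
  rw [dd_eq_mod k n hk hkn]
  rcases le_or_gt (s k n i) (j : ℕ) with hle | hlt
  · rw [show (j : ℕ) + (n - s k n i) = ((j : ℕ) - s k n i) + n by omega,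
      Nat.add_mod_right, Nat.mod_eq_of_lt (by omega)]
    omega
  · rw [Nat.mod_eq_of_lt (by omega)]
    omega


lemma dd_of_add (k n : ℕ) (hk : 1 ≤ k) (hkn : k ≤ n) (i : Fin k) (t : ℕ) (ht : t < n) :
    dd k n i ⟨(s k n i + t) % n, Nat.mod_lt _ (by omega)⟩ = t := by
  haveI : NeZero n := ⟨by omega⟩
  show ((((s k n i + t) % n : ℕ) : ZMod n) - ((s k n i : ℕ) : ZMod n)).val = t
  rw [zcast_mod, Nat.cast_add]
  rw [show ((s k n i : ℕ) : ZMod n) + ((t : ℕ) : ZMod n) - ((s k n i : ℕ) : ZMod n)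
      = ((t : ℕ) : ZMod n) by ring]
  exact ZMod.val_cast_of_lt ht

lemma zero_count (k n : ℕ) (hk : 1 ≤ k) (hkn : k ≤ n) (i : Fin k) :
    (Finset.univ.filter (fun j : Fin n => dd k n i j < k - 1)).card = k - 1 := by
  have hn : 1 ≤ n := hk.trans hkn
  haveI : NeZero n := ⟨by omega⟩
  have hbij : (Finset.univ.filter (fun j : Fin n => dd k n i j < k - 1)).card
      = (Finset.range (k - 1)).card := by
    refine Finset.card_bij' (fun j _ => dd k n i j)
      (fun t _ => ⟨(s k n i + t) % n, Nat.mod_lt _ (by omega)⟩) ?_ ?_ ?_ ?_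
    · intro a ha
      exact Finset.mem_range.mpr (Finset.mem_filter.mp ha).2
    · intro t ht
      have h1 := Finset.mem_range.mp ht
      exact Finset.mem_filter.mpr ⟨Finset.mem_univ _, by
        rw [dd_of_add k n hk hkn i t (by omega)]; omega⟩
    · intro a ha
      have h1 : dd k n i a < k - 1 := (Finset.mem_filter.mp ha).2
      apply cast_fin_inj (n := n)
      show ((((s k n i + dd k n i a) % n : ℕ)) : ZMod n) = ((a : ℕ) : ZMod n)
      rw [zcast_mod, Nat.cast_add]
      have h5 : ((dd k n i a : ℕ) : ZMod n)
          = ((a : ℕ) : ZMod n) - ((s k n i : ℕ) : ZMod n) := by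
        show (((((a : ℕ) : ZMod n) - ((s k n i : ℕ) : ZMod n)).val : ℕ) : ZMod n) = _
        rw [ZMod.natCast_val, ZMod.cast_id]
      rw [h5]; ring
    · intro t ht
      exact dd_of_add k n hk hkn i t (by have := Finset.mem_range.mp ht; omega)
  rw [hbij, Finset.card_range]

lemma rowSupp_card (k n : ℕ) (hk : 1 ≤ k) (hkn : k ≤ n) (i : Fin k) :
    (rowSupp (Mm k n) i).card = n - k + 1 := by
  have h1 : rowSupp (Mm k n) i
      = Finset.univ.filter (fun j : Fin n => ¬ (dd k n i j < k - 1)) := by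
    apply Finset.filter_congr
    intro j _
    simp [Mm]
  have h2 := Finset.card_filter_add_card_filter_not
    (s := (Finset.univ : Finset (Fin n))) (p := fun j : Fin n => dd k n i j < k - 1)
  rw [zero_count k n hk hkn i] at h2
  rw [h1]
  have h3 : (Finset.univ : Finset (Fin n)).card = n := by simp
  omega



/-- ceiling of x*k/n -/
def Cc (k n x : ℕ) : ℕ := (x * k + (n - 1)) / n

lemma lt_C {k n : ℕ} (hn : 0 < n) (i x : ℕ) : i * n < x * k ↔ i < Cc k n x := by
  have e : (i + 1) * n = i * n + n := by ring
  constructor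
  · intro hlt
    rw [Cc, Nat.lt_iff_add_one_le, Nat.le_div_iff_mul_le hn]
    omega
  · intro h
    rw [Cc, Nat.lt_iff_add_one_le, Nat.le_div_iff_mul_le hn] at h
    omega

lemma C_mono {k n : ℕ} {x y : ℕ} (h : x ≤ y) : Cc k n x ≤ Cc k n y :=
  Nat.div_le_div_right (by have := Nat.mul_le_mul_right k h; omega)

lemma C_n {k n : ℕ} (hn : 0 < n) : Cc k n n = k := by
  rw [Cc]
  apply Nat.div_eq_of_lt_le
  · have : k * n = n * k := Nat.mul_comm _ _
    omega
  · have : (k + 1) * n = n * k + n := by ring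
    omega

lemma C_zero {k n : ℕ} (hn : 0 < n) : Cc k n 0 = 0 := by
  rw [Cc, zero_mul, zero_add]
  exact Nat.div_eq_of_lt (by omega)

lemma C_big {k n x : ℕ} (hn : 0 < n) (h : n ≤ x) : k ≤ Cc k n x :=
  le_trans (le_of_eq (C_n hn).symm) (C_mono h)

lemma S1 {k n : ℕ} (hn : 0 < n) (x d : ℕ) :
    Cc k n x + d * k / n ≤ Cc k n (x + d) := by
  have h1 := Nat.div_mul_le_self (d * k) n
  rw [Cc, Cc, ← Nat.add_mul_div_right _ _ hn]
  apply Nat.div_le_div_right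
  have h2 : (x + d) * k = x * k + d * k := by ring
  omega

lemma S2 {k n : ℕ} (hn : 0 < n) (x d : ℕ) :
    Cc k n (x + d) ≤ Cc k n x + (d * k + (n - 1)) / n := by
  have h1 := Nat.div_add_mod (d * k + (n - 1)) n
  have h2 : (d * k + (n - 1)) % n < n := Nat.mod_lt _ hn
  set q := (d * k + (n - 1)) / n with hq
  have hc : n * q = q * n := Nat.mul_comm _ _
  rw [Cc, Cc, ← Nat.add_mul_div_right _ _ hn]
  apply Nat.div_le_div_right
  have h3 : (x + d) * k = x * k + d * k := by ring
  omega

lemma S3 {k n : ℕ} (hn : 0 < n) {d : ℕ} (hd : d ≤ n) :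
    (n - d) * k / n + (d * k + (n - 1)) / n = k := by
  have h1 := Nat.div_add_mod (d * k + (n - 1)) n
  have h2 : (d * k + (n - 1)) % n < n := Nat.mod_lt _ hn
  set q := (d * k + (n - 1)) / n with hq
  set r := (d * k + (n - 1)) % n with hr
  have hdk : d * k ≤ n * k := Nat.mul_le_mul_right _ hd
  have hc1 : n * q = q * n := Nat.mul_comm _ _
  have hc2 : k * n = n * k := Nat.mul_comm _ _
  have hqk : q ≤ k := by
    rw [hq, Nat.div_le_iff_le_mul_add_pred hn]
    omega
  have hqn : q * n ≤ k * n := Nat.mul_le_mul_right _ hqk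
  have h3 : (n - d) * k / n = k - q := by
    apply Nat.div_eq_of_lt_le
    · have e1 : (n - d) * k = n * k - d * k := Nat.sub_mul _ _ _
      have e2 : (k - q) * n = k * n - q * n := Nat.sub_mul _ _ _
      omega
    · have e1 : (n - d) * k = n * k - d * k := Nat.sub_mul _ _ _
      have e2 : (k - q + 1) * n = k * n - q * n + n := by
        rw [add_mul, Nat.sub_mul, one_mul]
      omega
  omega

lemma S4 {k n : ℕ} (hn : 0 < n) {d : ℕ} (hd : d ≤ n) :
    ((n - d) * k + (n - 1)) / n + d * k / n = k := by
  have h1 := Nat.div_add_mod (d * k) n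
  have h2 : d * k % n < n := Nat.mod_lt _ hn
  set q := d * k / n with hq
  set r := d * k % n with hr
  have hdk : d * k ≤ n * k := Nat.mul_le_mul_right _ hd
  have hc1 : n * q = q * n := Nat.mul_comm _ _
  have hc2 : k * n = n * k := Nat.mul_comm _ _
  have hqk : q ≤ k := by
    rw [hq, Nat.div_le_iff_le_mul_add_pred hn]
    omega
  have hqn : q * n ≤ k * n := Nat.mul_le_mul_right _ hqk
  have h3 : ((n - d) * k + (n - 1)) / n = k - q := by
    apply Nat.div_eq_of_lt_le
    · have e1 : (n - d) * k = n * k - d * k := Nat.sub_mul _ _ _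
      have e2 : (k - q) * n = k * n - q * n := Nat.sub_mul _ _ _
      omega
    · have e1 : (n - d) * k = n * k - d * k := Nat.sub_mul _ _ _
      have e2 : (k - q + 1) * n = k * n - q * n + n := by
        rw [add_mul, Nat.sub_mul, one_mul]
      omega
  omega

lemma ceil_le_floor_add_one {k n : ℕ} (hn : 0 < n) (d : ℕ) :
    (d * k + (n - 1)) / n ≤ d * k / n + 1 := by
  have h1 : (d * k + (n - 1)) / n ≤ (d * k + n) / n := Nat.div_le_div_right (by omega)
  rw [Nat.add_div_right _ hn] at h1
  exact h1

lemma cardFinLt (k t : ℕ) :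
    (Finset.univ.filter (fun i : Fin k => (i : ℕ) < t)).card = min t k := by
  rcases le_or_gt k t with h | h
  · rw [Finset.filter_true_of_mem (fun i _ => lt_of_lt_of_le i.isLt h)]
    simp [Nat.min_eq_right h]
  · have h2 : (Finset.univ.filter (fun i : Fin k => (i : ℕ) < t)).card
        = (Finset.range t).card := by
      refine Finset.card_bij' (fun a _ => (a : ℕ))
        (fun a ha => ⟨a, lt_trans (Finset.mem_range.mp ha) h⟩) ?_ ?_ ?_ ?_
      · intro a ha; exact Finset.mem_range.mpr (Finset.mem_filter.mp ha).2
      · intro a ha; exact Finset.mem_filter.mpr ⟨Finset.mem_univ _, Finset.mem_range.mp ha⟩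
      · intro a ha; exact Fin.ext rfl
      · intro a ha; rfl
    rw [h2, Finset.card_range, Nat.min_eq_left (le_of_lt h)]


lemma N_eq (k n : ℕ) (hk : 1 ≤ k) (hkn : k ≤ n) (x : ℕ) :
    (Finset.univ.filter (fun i : Fin k => s k n i < x)).card = min (Cc k n x) k := by
  have hn : 0 < n := by omega
  have h0 : Finset.univ.filter (fun i : Fin k => s k n i < x)
      = Finset.univ.filter (fun i : Fin k => (i : ℕ) < Cc k n x) := by
    apply Finset.filter_congr
    intro i _
    have h1 : s k n i < x ↔ (i : ℕ) * n < x * k :=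
      Nat.div_lt_iff_lt_mul (by omega)
    rw [h1, lt_C hn]
  rw [h0, cardFinLt]

lemma z_bounds (k n : ℕ) (hk : 1 ≤ k) (hkn : k ≤ n) (j : Fin n) :
    (k - 1) * k / n ≤ (Finset.univ.filter (fun i : Fin k => dd k n i j < k - 1)).card ∧
      (Finset.univ.filter (fun i : Fin k => dd k n i j < k - 1)).card ≤ (k - 1) * k / n + 1 := by
  have hn : 0 < n := by omega
  have hj := j.isLt
  -- split into the two window pieces
  have h0 : Finset.univ.filter (fun i : Fin k => dd k n i j < k - 1)
      = Finset.univ.filter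
          (fun i : Fin k => s k n i ≤ (j : ℕ) ∧ (j : ℕ) < s k n i + (k - 1)) ∪
        Finset.univ.filter (fun i : Fin k => (j : ℕ) + n < s k n i + (k - 1)) := by
    ext i
    simp only [Finset.mem_filter, Finset.mem_union, Finset.mem_univ, true_and]
    rw [dd_lt_iff k n hk hkn i j]
  have hdisj : Disjoint
      (Finset.univ.filter
        (fun i : Fin k => s k n i ≤ (j : ℕ) ∧ (j : ℕ) < s k n i + (k - 1)))
      (Finset.univ.filter (fun i : Fin k => (j : ℕ) + n < s k n i + (k - 1))) := by
    rw [Finset.disjoint_left]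
    intro i h1 h2
    have h3 := (Finset.mem_filter.mp h1).2
    have h4 := (Finset.mem_filter.mp h2).2
    omega
  have hcard : (Finset.univ.filter (fun i : Fin k => dd k n i j < k - 1)).card
      = (Finset.univ.filter
          (fun i : Fin k => s k n i ≤ (j : ℕ) ∧ (j : ℕ) < s k n i + (k - 1))).card
        + (Finset.univ.filter (fun i : Fin k => (j : ℕ) + n < s k n i + (k - 1))).card := by
    rw [h0, Finset.card_union_of_disjoint hdisj]
  -- first piece: difference of two prefix counts
  have hA : Finset.univ.filter
        (fun i : Fin k => s k n i ≤ (j : ℕ) ∧ (j : ℕ) < s k n i + (k - 1))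
      = Finset.univ.filter (fun i : Fin k => s k n i < (j : ℕ) + 1) \
        Finset.univ.filter (fun i : Fin k => s k n i < (j : ℕ) + 1 - (k - 1)) := by
    ext i
    simp only [Finset.mem_filter, Finset.mem_sdiff, Finset.mem_univ, true_and]
    omega
  have hAsub : Finset.univ.filter (fun i : Fin k => s k n i < (j : ℕ) + 1 - (k - 1))
      ⊆ Finset.univ.filter (fun i : Fin k => s k n i < (j : ℕ) + 1) := by
    intro i hi
    have h5 := (Finset.mem_filter.mp hi).2
    exact Finset.mem_filter.mpr ⟨Finset.mem_univ _, by omega⟩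
  have hAcard : (Finset.univ.filter
        (fun i : Fin k => s k n i ≤ (j : ℕ) ∧ (j : ℕ) < s k n i + (k - 1))).card
      = (Finset.univ.filter (fun i : Fin k => s k n i < (j : ℕ) + 1)).card
        - (Finset.univ.filter (fun i : Fin k => s k n i < (j : ℕ) + 1 - (k - 1))).card := by
    rw [hA, Finset.card_sdiff_of_subset hAsub]
  -- second piece: complement of a prefix count
  have hB : Finset.univ.filter (fun i : Fin k => (j : ℕ) + n < s k n i + (k - 1))
      = Finset.univ \
        Finset.univ.filter (fun i : Fin k => s k n i < (j : ℕ) + n + 2 - k) := by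
    ext i
    simp only [Finset.mem_filter, Finset.mem_sdiff, Finset.mem_univ, true_and]
    omega
  have hBcard : (Finset.univ.filter
        (fun i : Fin k => (j : ℕ) + n < s k n i + (k - 1))).card
      = k - (Finset.univ.filter (fun i : Fin k => s k n i < (j : ℕ) + n + 2 - k)).card := by
    rw [hB, Finset.card_sdiff_of_subset (Finset.filter_subset _ _)]
    congr 1
    simp
  rw [hcard, hAcard, hBcard, N_eq k n hk hkn, N_eq k n hk hkn, N_eq k n hk hkn]
  -- abbreviations
  have hx1len : (j : ℕ) + 1 ≤ n := by omega
  have hCx1 : Cc k n ((j : ℕ) + 1) ≤ k := le_trans (C_mono hx1len) (le_of_eq (C_n hn))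
  have hBB' := ceil_le_floor_add_one (k := k) hn (k - 1)
  rcases le_or_gt (k - 1) ((j : ℕ) + 1) with hcase | hcase
  · -- no wraparound
    have hx0 : (j : ℕ) + 1 - (k - 1) + (k - 1) = (j : ℕ) + 1 := by omega
    have hS1 := S1 (k := k) hn ((j : ℕ) + 1 - (k - 1)) (k - 1)
    have hS2 := S2 (k := k) hn ((j : ℕ) + 1 - (k - 1)) (k - 1)
    rw [hx0] at hS1 hS2
    have hXbig : n ≤ (j : ℕ) + n + 2 - k := by omega
    have hN2 : k ≤ Cc k n ((j : ℕ) + n + 2 - k) := C_big hn hXbig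
    have hCx0 : Cc k n ((j : ℕ) + 1 - (k - 1)) ≤ Cc k n ((j : ℕ) + 1) := C_mono (by omega)
    omega
  · -- wraparound
    have hx0zero : (j : ℕ) + 1 - (k - 1) = 0 := by omega
    rw [hx0zero, C_zero hn]
    have hXeq : (j : ℕ) + n + 2 - k = ((j : ℕ) + 1) + (n - (k - 1)) := by omega
    rw [hXeq]
    have hS1 := S1 (k := k) hn ((j : ℕ) + 1) (n - (k - 1))
    have hS2 := S2 (k := k) hn ((j : ℕ) + 1) (n - (k - 1))
    have hS3 := S3 (k := k) hn (d := k - 1) (by omega)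
    have hS4 := S4 (k := k) hn (d := k - 1) (by omega)
    have hXlen : ((j : ℕ) + 1) + (n - (k - 1)) ≤ n := by omega
    have hCX : Cc k n (((j : ℕ) + 1) + (n - (k - 1))) ≤ k :=
      le_trans (C_mono hXlen) (le_of_eq (C_n hn))
    omega


lemma col_count (k n : ℕ) (hk : 1 ≤ k) (hkn : k ≤ n) (j : Fin n) :
    colW (Mm k n) j
      + (Finset.univ.filter (fun i : Fin k => dd k n i j < k - 1)).card = k := by
  have h1 : colSupp (Mm k n) j
      = Finset.univ.filter (fun i : Fin k => ¬ (dd k n i j < k - 1)) := by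
    apply Finset.filter_congr
    intro i _
    simp [Mm]
  have h2 := Finset.card_filter_add_card_filter_not
    (s := (Finset.univ : Finset (Fin k))) (p := fun i : Fin k => dd k n i j < k - 1)
  have h3 : (Finset.univ : Finset (Fin k)).card = k := by simp
  rw [colW, h1]
  omega

end S9

theorem stmt_9 (k n : ℕ) (hk : 1 ≤ k) (hkn : k ≤ n) :
    ∃ M : Fin k → Fin n → Bool,
      (∀ i, (rowSupp M i).card = n - k + 1) ∧
      (∀ j j' : Fin n, colW M j ≤ colW M j' + 1) ∧
      P3 M := by
  refine ⟨S9.Mm k n, fun i => S9.rowSupp_card k n hk hkn i, ?_, ?_⟩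
  · -- column balance
    intro j j'
    have hzj := S9.z_bounds k n hk hkn j
    have hzj' := S9.z_bounds k n hk hkn j'
    have hcj := S9.col_count k n hk hkn j
    have hcj' := S9.col_count k n hk hkn j'
    omega
  · -- P3
    intro I hI
    have hIcard : 1 ≤ I.card := Finset.Nonempty.card_pos hI
    have hV := S9.key k n hk hkn (I.card - 1) I (by omega)
    have hbi : I.biUnion (rowSupp (S9.Mm k n)) = Finset.univ \ S9.V k n I := by
      ext j
      constructor
      · intro hj
        obtain ⟨i, hiI, hmem⟩ := Finset.mem_biUnion.mp hj
        have hge : k - 1 ≤ S9.dd k n i j := by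
          have h6 := (Finset.mem_filter.mp hmem).2
          simpa [S9.Mm] using h6
        refine Finset.mem_sdiff.mpr ⟨Finset.mem_univ _, fun hmemV => ?_⟩
        have hlt := (Finset.mem_filter.mp hmemV).2 i hiI
        omega
      · intro hj
        have hnV := (Finset.mem_sdiff.mp hj).2
        by_contra hno
        apply hnV
        refine Finset.mem_filter.mpr ⟨Finset.mem_univ _, fun i hiI => ?_⟩
        by_contra hge
        push_neg at hge
        apply hno
        refine Finset.mem_biUnion.mpr ⟨i, hiI, Finset.mem_filter.mpr
          ⟨Finset.mem_univ _, ?_⟩⟩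
        simp only [S9.Mm, decide_eq_true_eq]
        omega
    have hVn : (S9.V k n I).card ≤ n := by
      have := Finset.card_le_univ (S9.V k n I)
      simpa using this
    rw [hbi, Finset.card_sdiff_of_subset (Finset.subset_univ _)]
    have hcu : (Finset.univ : Finset (Fin n)).card = n := by simp
    omega
end

section
/- Let 1 ≤ k ≤ n and let q be a prime power with q > C(n−1, k−1). Let M be a k × n binary matrix in which every row has weight n − k + 1 and which satisfies: for every nonempty I ⊆ [k], |∪_{i∈I} R_i| ≥ n − k + |I|. Then there exists a k × n matrix G over F_q whose support equals M (i.e., G(i,j) ≠ 0 iff M(i,j) = 1) and such that every k × k submatrix of G is invertible (so G generates an [n,k] MDS code). -/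
/-!
Put independent indeterminates `x i j` on the support of `M`. For every set `S` of `k` columns,
Hall's theorem (fed by `P3`) matches the rows injectively into `S` inside the support, so the
maximal minor on `S` of this generic matrix specialises to `± 1` and is a nonzero polynomial.
A variable `x i j` has degree at most one in a minor, and occurs only in the `C(n-1, k-1)` minors
whose column set contains `j`; so the product of all maximal minors has degree `< q` in every
variable, and by the combinatorial Nullstellensatz it does not vanish at some point of `F^(k × n)`.
Specialising there gives `G`. As all its maximal minors are nonzero, no row of `G` has `k` or
more zeros, and since the rows of `M` have weight `n - k + 1` this forces the support of `G` to be
all of `M`.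
-/

open Finset MvPolynomial

section Determinants

variable {ι m R : Type*} [Fintype ι] [DecidableEq ι] [CommRing R]

lemma Matrix.det_submatrix_eq_zero_iff_of_range_subset (A : Matrix ι m R) {e f : ι → m}
    (hf : Function.Injective f) (h : Set.range f ⊆ Set.range e) :
    (A.submatrix id f).det = 0 ↔ (A.submatrix id e).det = 0 := by
  choose g hg using fun t => h ⟨t, rfl⟩
  have hg_inj : Function.Injective g := fun a b hab => hf (by rw [← hg a, ← hg b, hab])
  let τ : Equiv.Perm ι := Equiv.ofBijective g (Finite.injective_iff_bijective.mp hg_inj)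
  have hperm : A.submatrix id f = (A.submatrix id e).submatrix id τ := by
    ext i t
    simp [τ, hg]
  have hsign : IsUnit ((τ.sign : ℤ) : R) := τ.sign.isUnit.map (Int.castRingHom R)
  rw [hperm, Matrix.det_permute', hsign.mul_right_eq_zero]

lemma MvPolynomial.degreeOf_det_le {σ : Type*} (A : Matrix ι ι (MvPolynomial σ R)) (v : σ) :
    degreeOf v A.det ≤ ∑ t, univ.sup fun r => degreeOf v (A r t) := by
  rw [Matrix.det_apply']
  refine (degreeOf_sum_le _ _ _).trans (Finset.sup_le fun τ _ => ?_)
  rw [← map_intCast (C : R →+* MvPolynomial σ R)]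
  refine (degreeOf_C_mul_le _ _ _).trans ((degreeOf_prod_le _ _ _).trans ?_)
  exact sum_le_sum fun t _ => le_sup (f := fun r => degreeOf v (A r t)) (mem_univ (τ t))

end Determinants

section MaximalMinors

variable {k n : ℕ} {R : Type*} [CommRing R]

/-- One factor per `k`-set of columns, not per injection `Fin k → Fin n`: this is what keeps the
degree in each variable down to `C(n-1, k-1)`. -/
noncomputable def prodMaximalMinors (A : Matrix (Fin k) (Fin n) R) : R :=
  ∏ S ∈ (univ.powersetCard k).attach,
    (A.submatrix id (S.1.orderEmbOfFin (mem_powersetCard_univ.1 S.2))).det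

lemma prodMaximalMinors_ne_zero_iff [IsDomain R] (A : Matrix (Fin k) (Fin n) R) :
    prodMaximalMinors A ≠ 0 ↔
      ∀ s : Fin k → Fin n, Function.Injective s → (A.submatrix id s).det ≠ 0 := by
  rw [prodMaximalMinors, prod_ne_zero_iff]
  constructor
  · intro h s hs
    have hS : #(univ.image s) = k := by rw [card_image_of_injective _ hs, card_fin]
    have hmem : univ.image s ∈ univ.powersetCard k := mem_powersetCard_univ.2 hS
    rw [Ne, A.det_submatrix_eq_zero_iff_of_range_subset (e := (univ.image s).orderEmbOfFin hS) hs
      (by simp [range_orderEmbOfFin])]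
    exact h ⟨_, hmem⟩ (mem_attach _ _)
  · exact fun h S _ => h _ ((S.1.orderEmbOfFin _).injective)

lemma RingHom.map_prodMaximalMinors {S : Type*} [CommRing S] (φ : R →+* S)
    (A : Matrix (Fin k) (Fin n) R) :
    φ (prodMaximalMinors A) = prodMaximalMinors (A.map φ) := by
  simp only [prodMaximalMinors, map_prod, RingHom.map_det, RingHom.mapMatrix_apply,
    Matrix.submatrix_map]

end MaximalMinors

section GenericMatrix

variable {k n : ℕ} (R : Type*) [CommRing R] (M : Fin k → Fin n → Bool)

noncomputable def genericMatrix : Matrix (Fin k) (Fin n) (MvPolynomial (Fin k × Fin n) R) :=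
  fun i j => if M i j then X (i, j) else 0

variable {R M}

lemma eval_genericMatrix (φ : Fin k × Fin n → R) (i : Fin k) (j : Fin n) :
    eval φ (genericMatrix R M i j) = if M i j then φ (i, j) else 0 := by
  unfold genericMatrix
  split_ifs <;> simp

lemma degreeOf_genericMatrix_le [Nontrivial R] (i r : Fin k) (j c : Fin n) :
    degreeOf (i, j) (genericMatrix R M r c) ≤ if c = j then 1 else 0 := by
  unfold genericMatrix
  split_ifs with hM hcj
  · rw [degreeOf_X]
    split_ifs <;> simp
  · rw [degreeOf_X, if_neg fun h => hcj (congrArg Prod.snd h).symm]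
  all_goals simp

lemma degreeOf_det_genericMatrix_submatrix_le [Nontrivial R] {e : Fin k → Fin n}
    (he : Function.Injective e) {S : Finset (Fin n)} (heS : ∀ t, e t ∈ S)
    (i : Fin k) (j : Fin n) :
    degreeOf (i, j) ((genericMatrix R M).submatrix id e).det ≤ if j ∈ S then 1 else 0 := by
  refine (degreeOf_det_le _ _).trans ?_
  calc ∑ t, univ.sup (fun r => degreeOf (i, j) (genericMatrix R M r (e t)))
      ≤ ∑ t, if e t = j then 1 else 0 :=
        sum_le_sum fun t _ => Finset.sup_le fun r _ => degreeOf_genericMatrix_le i r j (e t)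
    _ = #{t | e t = j} := by rw [card_filter]
    _ ≤ if j ∈ S then 1 else 0 := by
        split_ifs with hj
        · exact card_le_one.2 fun a ha b hb =>
            he ((mem_filter.1 ha).2.trans (mem_filter.1 hb).2.symm)
        · have hej : ∀ t, e t ≠ j := fun t ht => hj (ht ▸ heS t)
          simp [hej]

lemma degreeOf_prodMaximalMinors_genericMatrix_le [Nontrivial R] (hk : 1 ≤ k)
    (v : Fin k × Fin n) :
    degreeOf v (prodMaximalMinors (genericMatrix R M)) ≤ (n - 1).choose (k - 1) := by
  obtain ⟨i, j⟩ := v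
  refine (degreeOf_prod_le _ _ _).trans ?_
  calc _ ≤ ∑ S ∈ (univ.powersetCard k).attach, if j ∈ S.1 then 1 else 0 :=
        sum_le_sum fun S _ => degreeOf_det_genericMatrix_submatrix_le
          (S.1.orderEmbOfFin _).injective (orderEmbOfFin_mem S.1 _) i j
    _ = #{S ∈ univ.powersetCard k | {j} ⊆ S} := by
        rw [sum_attach _ fun S => if j ∈ S then 1 else 0, card_filter]
        simp only [singleton_subset_iff]
    _ = (n - 1).choose (k - 1) := by
        rw [card_filter_powersetCard_subset _ _ _ (subset_univ _) (by simpa using hk)]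
        simp

lemma det_genericMatrix_submatrix_ne_zero [Nontrivial R] {f : Fin k → Fin n}
    (hf : Function.Injective f) (hM : ∀ i, M i (f i) = true) :
    ((genericMatrix R M).submatrix id f).det ≠ 0 := by
  let φ : Fin k × Fin n → R := fun v => if f v.1 = v.2 then 1 else 0
  have hφ : RingHom.mapMatrix (eval φ) ((genericMatrix R M).submatrix id f) = 1 := by
    ext r t
    by_cases hrt : r = t
    · simp [eval_genericMatrix, φ, hrt, hM, Matrix.one_apply]
    · simp [eval_genericMatrix, φ, hf.eq_iff, hrt]
  intro h
  simpa [h, hφ] using RingHom.map_det (eval φ) ((genericMatrix R M).submatrix id f)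

end GenericMatrix

section SupportConditions

variable {k n : ℕ} {M : Fin k → Fin n → Bool}

lemma P3.exists_injective_mem_rowSupp_inter (hP3 : P3 M) {S : Finset (Fin n)} (hS : k ≤ #S) :
    ∃ f : Fin k → Fin n, Function.Injective f ∧ ∀ i, f i ∈ rowSupp M i ∩ S := by
  refine (all_card_le_biUnion_card_iff_exists_injective _).1 fun I => ?_
  rcases I.eq_empty_or_nonempty with rfl | hI
  · simp
  rw [← biUnion_inter]
  set A := I.biUnion (rowSupp M)
  have hA : n - k + #I ≤ #A := hP3 I hI
  have hunion : #(A ∪ S) ≤ n := (card_le_univ _).trans_eq (Fintype.card_fin n)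
  have hinter := card_union_add_card_inter A S
  omega

lemma P3.prodMaximalMinors_genericMatrix_ne_zero (R : Type*) [CommRing R] [IsDomain R]
    (hP3 : P3 M) : prodMaximalMinors (genericMatrix R M) ≠ 0 := by
  refine (prodMaximalMinors_ne_zero_iff _).2 fun s hs => ?_
  obtain ⟨f, hf, hfS⟩ := hP3.exists_injective_mem_rowSupp_inter (S := univ.image s)
    (by rw [card_image_of_injective _ hs, card_fin])
  have hrange : Set.range f ⊆ Set.range s := by
    rintro _ ⟨i, rfl⟩
    simpa using (mem_inter.1 (hfS i)).2
  rw [Ne, ← (genericMatrix R M).det_submatrix_eq_zero_iff_of_range_subset hf hrange]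
  exact det_genericMatrix_submatrix_ne_zero hf fun i => by
    simpa [rowSupp] using (mem_inter.1 (hfS i)).1

end SupportConditions

lemma MvPolynomial.exists_eval_ne_zero_of_degreeOf_lt {σ R : Type*} [Finite σ] [CommRing R]
    [IsDomain R] [Fintype R] {P : MvPolynomial σ R} (hP : P ≠ 0)
    (hdeg : ∀ v, degreeOf v P < Fintype.card R) : ∃ x, eval x P ≠ 0 := by
  by_contra! h
  exact hP (eq_zero_of_eval_zero_at_prod_finset P (fun _ => univ) hdeg fun x _ => h x)

section MDS

variable {k n : ℕ} {R : Type*} [CommRing R] [DecidableEq R] {G : Matrix (Fin k) (Fin n) R}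

lemma card_filter_eq_zero_lt_of_det_submatrix_ne_zero
    (hG : ∀ s : Fin k → Fin n, Function.Injective s → (G.submatrix id s).det ≠ 0)
    (i : Fin k) :
    #{c | G i c = 0} < k := by
  by_contra! h
  obtain ⟨T, hT, hTk⟩ := exists_subset_card_eq h
  refine hG _ (T.orderEmbOfFin hTk).injective (Matrix.det_eq_zero_of_row_eq_zero i fun t => ?_)
  exact (mem_filter.1 (hT (orderEmbOfFin_mem T hTk t))).2

lemma ne_zero_iff_of_det_submatrix_ne_zero (hkn : k ≤ n) {M : Fin k → Fin n → Bool}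
    (hrow : ∀ i, #(rowSupp M i) = n - k + 1) (hGM : ∀ i j, G i j ≠ 0 → M i j = true)
    (hG : ∀ s : Fin k → Fin n, Function.Injective s → (G.submatrix id s).det ≠ 0)
    (i : Fin k) (j : Fin n) : G i j ≠ 0 ↔ M i j = true := by
  refine ⟨hGM i j, fun hM hGij => ?_⟩
  have hsupp : ({c | ¬G i c = 0} : Finset (Fin n)) ⊆ (rowSupp M i).erase j := fun c hc => by
    have hc' := (mem_filter.1 hc).2
    exact mem_erase.2 ⟨fun hcj => hc' (hcj ▸ hGij), by simpa [rowSupp] using hGM i c hc'⟩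
  have hle := card_le_card hsupp
  rw [card_erase_of_mem (by simpa [rowSupp] using hM), hrow] at hle
  have hlt := card_filter_eq_zero_lt_of_det_submatrix_ne_zero hG i
  have htotal := card_filter_add_card_filter_not (s := univ) (fun c => G i c = 0)
  rw [card_univ, Fintype.card_fin] at htotal
  omega

end MDS

theorem stmt_10 (k n : ℕ) (hk : 1 ≤ k) (hkn : k ≤ n)
    (F : Type) [Field F] [Fintype F]
    (hq : (n - 1).choose (k - 1) < Fintype.card F)
    (M : Fin k → Fin n → Bool)
    (hrow : ∀ i, (rowSupp M i).card = n - k + 1)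
    (hP3 : P3 M) :
    ∃ G : Matrix (Fin k) (Fin n) F,
      (∀ i j, G i j ≠ 0 ↔ M i j = true) ∧
      (∀ s : Fin k → Fin n, Function.Injective s → (G.submatrix id s).det ≠ 0) := by
  classical
  obtain ⟨φ, hφ⟩ := exists_eval_ne_zero_of_degreeOf_lt
    (hP3.prodMaximalMinors_genericMatrix_ne_zero F)
    fun v => (degreeOf_prodMaximalMinors_genericMatrix_le hk v).trans_lt hq
  set G := (genericMatrix F M).map (eval φ)
  have hG : ∀ s : Fin k → Fin n, Function.Injective s → (G.submatrix id s).det ≠ 0 := by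
    rw [RingHom.map_prodMaximalMinors] at hφ
    exact (prodMaximalMinors_ne_zero_iff G).1 hφ
  have hGM : ∀ i j, G i j ≠ 0 → M i j = true := fun i j hGij => by
    by_contra hM
    simp [G, eval_genericMatrix, hM] at hGij
  exact ⟨G, ne_zero_iff_of_det_submatrix_ne_zero hkn hrow hGM hG, hG⟩
end

section
/- Let M be a k × n binary matrix with k ≤ n satisfying (P3): for every nonempty I ⊆ [k], |∪_{i∈I} R_i| ≥ n − k + |I|. Then for every k-subset J ⊆ [n], the k × k submatrix of M on columns J, viewed as a bipartite graph, has a perfect matching between the k rows and the columns of J. -/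
theorem stmt_16 (k n : ℕ) (hkn : k ≤ n) (M : Fin k → Fin n → Bool)
    (hP3 : P3 M) :
    ∀ J : Finset (Fin n), J.card = k →
      ∃ σ : Fin k → Fin n, Function.Injective σ ∧ ∀ i, σ i ∈ J ∧ M i (σ i) = true := by
  intro J hJ
  have hall : ∀ s : Finset (Fin k), s.card ≤ (s.biUnion (fun i => J ∩ rowSupp M i)).card := by
    intro s
    rcases s.eq_empty_or_nonempty with rfl | hs
    · simp
    · have h1 : n - k + s.card ≤ (s.biUnion (rowSupp M)).card := hP3 s hs
      have hsub : s.biUnion (fun i => J ∩ rowSupp M i) = J ∩ s.biUnion (rowSupp M) := by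
        ext x; simp [Finset.mem_biUnion, Finset.mem_inter]; tauto
      rw [hsub]
      have hle : (s.biUnion (rowSupp M) \ J).card ≤ (Finset.univ \ J).card :=
        Finset.card_le_card (Finset.sdiff_subset_sdiff (Finset.subset_univ _) le_rfl)
      have hcompl : (Finset.univ \ J).card = n - k := by
        rw [Finset.card_sdiff_of_subset (Finset.subset_univ J)]; simp [hJ]
      have heq : (J ∩ s.biUnion (rowSupp M)).card + (s.biUnion (rowSupp M) \ J).card
          = (s.biUnion (rowSupp M)).card := by
        rw [Finset.inter_comm, Finset.card_inter_add_card_sdiff]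
      omega
  obtain ⟨σ, hinj, hmem⟩ := (Finset.all_card_le_biUnion_card_iff_existsInjective'
      (fun i : Fin k => J ∩ rowSupp M i)).mp hall
  refine ⟨σ, hinj, fun i => ?_⟩
  have h := hmem i
  simp only [Finset.mem_inter, rowSupp, Finset.mem_filter, Finset.mem_univ, true_and] at h
  exact h
end

section
/- Let M be a k × n binary matrix satisfying (P3), fix the swap setup at rows 1 and 2 (both have M(i, j_max) = 1, M(i, j_min) = 0), and let I_1, I_2 be minimal violating sets for rows 1 and 2 respectively (I_i ⊆ [k] \ {i}, {i} ∪ I_i violates (P3) in M^(i), minimal with this property). If every row of M has weight n − k + 1 and I_1 ∩ I_2 = {ℓ} for a single element ℓ, then |R_{{1,2} ∪ I_1 ∪ I_2}| ≤ n − k + |I_1| + |I_2|, contradicting (P3) since |{1,2} ∪ I_1 ∪ I_2| = |I_1| + |I_2| + 1. Hence |I_1 ∩ I_2| = 1 is impossible. -/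
theorem stmt_18 (k n : ℕ) (hkn : k ≤ n) (M : Fin k → Fin n → Bool)
    (hrow : ∀ i, (rowSupp M i).card = n - k + 1)
    (hP3 : P3 M)
    (jmax jmin : Fin n)
    (r1 r2 : Fin k) (hr : r1 ≠ r2)
    (h11 : M r1 jmax = true) (h10 : M r1 jmin = false)
    (h21 : M r2 jmax = true) (h20 : M r2 jmin = false)
    (I1 I2 : Finset (Fin k))
    (hI1 : r1 ∉ I1) (hI2 : r2 ∉ I2)
    (hviol1 : violates (swapEntries M r1 jmax jmin) (insert r1 I1))
    (hviol2 : violates (swapEntries M r2 jmax jmin) (insert r2 I2))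
    (hmin1 : ∀ I' ⊂ I1, ¬ violates (swapEntries M r1 jmax jmin) (insert r1 I'))
    (hmin2 : ∀ I' ⊂ I2, ¬ violates (swapEntries M r2 jmax jmin) (insert r2 I'))
    (h2I1 : r2 ∉ I1) (h1I2 : r1 ∉ I2)
    (hmax1 : jmax ∉ I1.biUnion (rowSupp M)) (hmax2 : jmax ∉ I2.biUnion (rowSupp M))
    (hmin1' : jmin ∈ I1.biUnion (rowSupp M)) (hmin2' : jmin ∈ I2.biUnion (rowSupp M)) :
    (I1 ∩ I2).card ≠ 1 := by
  intro hcard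
  obtain ⟨ℓ, hℓ⟩ := Finset.card_eq_one.mp hcard
  have hℓmem : ℓ ∈ I1 ∩ I2 := hℓ ▸ Finset.mem_singleton_self ℓ
  have hℓ1 : ℓ ∈ I1 := (Finset.mem_inter.mp hℓmem).1
  have hℓ2 : ℓ ∈ I2 := (Finset.mem_inter.mp hℓmem).2
  -- the key upper bound coming from `violates`
  have key : ∀ (r : Fin k) (I : Finset (Fin k)), r ∉ I → M r jmax = true →
      violates (swapEntries M r jmax jmin) (insert r I) →
      ((insert r I).biUnion (rowSupp M)).card ≤ n - k + I.card + 1 := by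
    intro r I hrI hM hv
    have hsub : ((insert r I).biUnion (rowSupp M)) \ {jmax} ⊆
        (insert r I).biUnion (rowSupp (swapEntries M r jmax jmin)) := by
      intro j hj
      simp only [Finset.mem_sdiff, Finset.mem_singleton, Finset.mem_biUnion,
        Finset.mem_insert] at hj ⊢
      obtain ⟨⟨s, hs, hjs⟩, hjne⟩ := hj
      refine ⟨s, hs, ?_⟩
      simp only [rowSupp, Finset.mem_filter, Finset.mem_univ, true_and] at hjs ⊢
      simp only [swapEntries]
      rcases hs with rfl | hsI
      · simp only [if_pos rfl, if_neg hjne]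
        by_cases hjmin : j = jmin <;> simp [hjmin, hjs]
      · have hsr : s ≠ r := fun h => hrI (h ▸ hsI)
        simp [hsr, hjs]
    have hjmem : jmax ∈ (insert r I).biUnion (rowSupp M) := by
      simp only [Finset.mem_biUnion, Finset.mem_insert]
      exact ⟨r, Or.inl rfl, by simp [rowSupp, hM]⟩
    have hcards : ({jmax} : Finset (Fin n)) ⊆ (insert r I).biUnion (rowSupp M) := by
      simpa using hjmem
    have h1 : (((insert r I).biUnion (rowSupp M)) \ {jmax}).card =
        ((insert r I).biUnion (rowSupp M)).card - 1 := by
      rw [Finset.card_sdiff_of_subset hcards, Finset.card_singleton]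
    have h2 := Finset.card_le_card hsub
    have h3 : (insert r I).card = I.card + 1 := Finset.card_insert_of_notMem hrI
    have hv' := hv
    unfold violates at hv'
    have hpos : 1 ≤ ((insert r I).biUnion (rowSupp M)).card :=
      Finset.card_pos.mpr ⟨jmax, hjmem⟩
    omega
  have hA1 := key r1 I1 hI1 h11 hviol1
  have hB1 := key r2 I2 hI2 h21 hviol2
  set A := (insert r1 I1).biUnion (rowSupp M) with hAdef
  set B := (insert r2 I2).biUnion (rowSupp M) with hBdef
  -- lower bound on |A ∩ B|
  have hRℓA : rowSupp M ℓ ⊆ A := Finset.subset_biUnion_of_mem _ (Finset.mem_insert_of_mem hℓ1)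
  have hRℓB : rowSupp M ℓ ⊆ B := Finset.subset_biUnion_of_mem _ (Finset.mem_insert_of_mem hℓ2)
  have hjA : jmax ∈ A := by
    simp only [hAdef, Finset.mem_biUnion]
    exact ⟨r1, Finset.mem_insert_self _ _, by simp [rowSupp, h11]⟩
  have hjB : jmax ∈ B := by
    simp only [hBdef, Finset.mem_biUnion]
    exact ⟨r2, Finset.mem_insert_self _ _, by simp [rowSupp, h21]⟩
  have hjRℓ : jmax ∉ rowSupp M ℓ := fun h =>
    hmax1 (Finset.mem_biUnion.mpr ⟨ℓ, hℓ1, h⟩)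
  have hinsub : insert jmax (rowSupp M ℓ) ⊆ A ∩ B := by
    intro j hj
    rcases Finset.mem_insert.mp hj with rfl | hj
    · exact Finset.mem_inter.mpr ⟨hjA, hjB⟩
    · exact Finset.mem_inter.mpr ⟨hRℓA hj, hRℓB hj⟩
  have hint : n - k + 2 ≤ (A ∩ B).card := by
    have := Finset.card_le_card hinsub
    rw [Finset.card_insert_of_notMem hjRℓ, hrow ℓ] at this
    omega
  -- the big set
  set S : Finset (Fin k) := insert r1 I1 ∪ insert r2 I2 with hSdef
  have hSbi : S.biUnion (rowSupp M) = A ∪ B := by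
    ext j
    simp only [hSdef, hAdef, hBdef, Finset.mem_biUnion, Finset.mem_union]
    constructor
    · rintro ⟨s, hs | hs, hjs⟩
      exacts [Or.inl ⟨s, hs, hjs⟩, Or.inr ⟨s, hs, hjs⟩]
    · rintro (⟨s, hs, hjs⟩ | ⟨s, hs, hjs⟩)
      exacts [⟨s, Or.inl hs, hjs⟩, ⟨s, Or.inr hs, hjs⟩]
  have hScard : S.card = I1.card + I2.card + 1 := by
    have hSeq : S = insert r1 (insert r2 (I1 ∪ I2)) := by
      ext x
      simp only [hSdef, Finset.mem_union, Finset.mem_insert]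
      tauto
    have h12 : r1 ∉ insert r2 (I1 ∪ I2) := by
      simp only [Finset.mem_insert, Finset.mem_union]
      push_neg
      exact ⟨hr, hI1, h1I2⟩
    have h2u : r2 ∉ I1 ∪ I2 := by
      simp only [Finset.mem_union]
      push_neg
      exact ⟨h2I1, hI2⟩
    have hcu : (I1 ∪ I2).card + (I1 ∩ I2).card = I1.card + I2.card :=
      Finset.card_union_add_card_inter _ _
    rw [hSeq, Finset.card_insert_of_notMem h12, Finset.card_insert_of_notMem h2u]
    omega
  have hP3S := hP3 S ⟨r1, by simp [hSdef]⟩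
  rw [hSbi, hScard] at hP3S
  have hAB : (A ∪ B).card + (A ∩ B).card = A.card + B.card :=
    Finset.card_union_add_card_inter _ _
  omega
end

section
/- Let 1 ≤ k ≤ n. Starting from any k × n binary matrix satisfying (P1) (each row has weight n − k + 1) and (P3) (|∪_{i∈I} R_i| ≥ n − k + |I| for all nonempty I ⊆ [k]), and repeatedly performing a swap that moves a 1 in some row from a maximum-weight column to a minimum-weight column while preserving (P1) and (P3), the process terminates after finitely many swaps (at most (k−1)·⌊n/2⌋) with a matrix additionally satisfying (P2): all column weights differ pairwise by at most one. -/
/-- Condition (P1): every row has weight `n - k + 1`. -/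
def P1 {k n : ℕ} (M : Fin k → Fin n → Bool) : Prop :=
  ∀ i, (rowSupp M i).card = n - k + 1

/-- Condition (P2): column weights pairwise differ by at most one. -/
def P2 {k n : ℕ} (M : Fin k → Fin n → Bool) : Prop :=
  ∀ j j' : Fin n, colW M j ≤ colW M j' + 1

set_option maxHeartbeats 1000000

section AuxLemmas

def gpot (A w : ℕ) : ℕ := (w - (A + 1)) + (A - w)

def Phi {k n : ℕ} (A : ℕ) (M : Fin k → Fin n → Bool) : ℕ := ∑ j, gpot A (colW M j)


lemma sum_colW {k n : ℕ} (M : Fin k → Fin n → Bool) :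
    ∑ j, colW M j = ∑ i, (rowSupp M i).card := by
  simp only [colW, colSupp, rowSupp, Finset.card_filter]
  exact Finset.sum_comm

lemma sum_colW_P1 {k n : ℕ} (M : Fin k → Fin n → Bool) (h1 : P1 M) :
    ∑ j, colW M j = k * (n - k + 1) := by
  rw [sum_colW, Finset.sum_congr rfl (fun i _ => h1 i)]
  simp [mul_comm]

lemma colW_le {k n : ℕ} (M : Fin k → Fin n → Bool) (j : Fin n) : colW M j ≤ k := by
  calc colW M j ≤ (Finset.univ : Finset (Fin k)).card := Finset.card_filter_le _ _
  _ = k := by simp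

lemma colW_pos {k n : ℕ} (hk : 1 ≤ k) (hkn : k ≤ n) (M : Fin k → Fin n → Bool)
    (h3 : P3 M) (j : Fin n) : 1 ≤ colW M j := by
  have hne : (Finset.univ : Finset (Fin k)).Nonempty := ⟨⟨0, hk⟩, Finset.mem_univ _⟩
  have h := h3 Finset.univ hne
  rw [Finset.card_univ, Fintype.card_fin] at h
  have hcle := Finset.card_le_univ (Finset.univ.biUnion (rowSupp M))
  rw [Fintype.card_fin] at hcle
  have hu : Finset.univ.biUnion (rowSupp M) = Finset.univ := by
    apply Finset.eq_univ_of_card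
    rw [Fintype.card_fin]
    omega
  have hj : j ∈ Finset.univ.biUnion (rowSupp M) := hu ▸ Finset.mem_univ j
  rw [Finset.mem_biUnion] at hj
  obtain ⟨i, -, hi⟩ := hj
  rw [rowSupp, Finset.mem_filter] at hi
  have hmem : i ∈ colSupp M j := by rw [colSupp, Finset.mem_filter]; exact ⟨Finset.mem_univ _, hi.2⟩
  exact Finset.card_pos.mpr ⟨i, hmem⟩

lemma colW_swap_max {k n : ℕ} (M : Fin k → Fin n → Bool) (i : Fin k) (jmax jmin : Fin n)
    (hne : jmax ≠ jmin) (hM : M i jmax = true) :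
    colW (swapEntries M i jmax jmin) jmax + 1 = colW M jmax := by
  have h : colSupp (swapEntries M i jmax jmin) jmax = (colSupp M jmax).erase i := by
    ext r
    simp only [colSupp, swapEntries, Finset.mem_filter, Finset.mem_erase, Finset.mem_univ,
      true_and]
    by_cases hr : r = i
    · subst hr; simp
    · simp [hr]
  have hmem : i ∈ colSupp M jmax := by
    rw [colSupp, Finset.mem_filter]; exact ⟨Finset.mem_univ _, hM⟩
  rw [colW, colW, h, Finset.card_erase_of_mem hmem]
  have := Finset.card_pos.mpr ⟨i, hmem⟩
  omega

lemma colW_swap_min {k n : ℕ} (M : Fin k → Fin n → Bool) (i : Fin k) (jmax jmin : Fin n)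
    (hne : jmax ≠ jmin) (hM : M i jmin = false) :
    colW (swapEntries M i jmax jmin) jmin = colW M jmin + 1 := by
  have h : colSupp (swapEntries M i jmax jmin) jmin = insert i (colSupp M jmin) := by
    ext r
    simp only [colSupp, swapEntries, Finset.mem_filter, Finset.mem_insert, Finset.mem_univ,
      true_and]
    by_cases hr : r = i
    · subst hr; simp [Ne.symm hne]
    · simp [hr]
  rw [colW, colW, h, Finset.card_insert_of_notMem]
  intro hmem
  rw [colSupp, Finset.mem_filter] at hmem
  rw [hmem.2] at hM
  simp at hM

lemma colW_swap_other {k n : ℕ} (M : Fin k → Fin n → Bool) (i : Fin k) (jmax jmin j : Fin n)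
    (hj1 : j ≠ jmax) (hj2 : j ≠ jmin) :
    colW (swapEntries M i jmax jmin) j = colW M j := by
  unfold colW colSupp swapEntries
  congr 1
  apply Finset.filter_congr
  intro r _
  by_cases hr : r = i
  · subst hr; simp [hj1, hj2]
  · simp [hr]


lemma chord (K A w : ℕ) (h1 : 1 ≤ w) (h2 : w ≤ K) (hA1 : 1 ≤ A) (hAk : A + 1 ≤ K) :
    (K - 1) * gpot A w ≤ (K - w) * (A - 1) + (w - 1) * (K - (A + 1)) := by
  unfold gpot
  rcases le_or_gt w A with h | h
  · have hz : w - (A + 1) = 0 := by omega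
    rw [hz, zero_add]
    zify [h, hA1, h1, h2, hAk, show 1 ≤ K by omega]
    nlinarith [mul_nonneg (show (0:ℤ) ≤ (w:ℤ) - 1 by omega)
      (show (0:ℤ) ≤ 2*((K:ℤ) - A) - 1 by omega)]
  · have hz : A - w = 0 := by omega
    rw [hz, add_zero]
    zify [show A + 1 ≤ w by omega, hA1, h1, h2, hAk, show 1 ≤ K by omega]
    nlinarith [mul_nonneg (show (0:ℤ) ≤ (K:ℤ) - w by omega)
      (show (0:ℤ) ≤ 2*(A:ℤ) - 1 by omega)]

lemma final_arith (k n A : ℕ) (hk : 2 ≤ k) (hkn : k ≤ n)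
    (hA1 : 1 ≤ A) (hAk : A + 1 ≤ k)
    (hl : n * A ≤ k * (n - k + 1)) (hr : k * (n - k + 1) < n * A + n) :
    (A - 1) * k + (k - (A + 1)) * (n - k) ≤ (k - 1) * (n / 2) := by
  have hn : 0 < n := by omega
  apply Nat.le_of_mul_le_mul_left _ hn
  obtain ⟨m, hme⟩ : ∃ m, n = 2 * m ∨ n = 2 * m + 1 := ⟨n / 2, by omega⟩
  rcases hme with rfl | rfl
  · have hd : 2 * m / 2 = m := by omega
    rw [hd]
    zify [hA1, hAk, hkn, show 1 ≤ k by omega] at hl hr ⊢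
    rcases le_or_gt (2 * k) (2 * m) with hc | hc
    · have h1 : ((k:ℤ) * (2*(m:ℤ) - k + 1) - 2*m + 1) * (2*(m:ℤ) - 2 * k)
          ≤ ((2*(m:ℤ)) * A) * (2*(m:ℤ) - 2 * k) :=
        mul_le_mul_of_nonneg_right (by push_cast at hr ⊢; linarith) (by omega)
      nlinarith [h1,
        mul_nonneg (show (0:ℤ) ≤ (m:ℤ) - k by omega) (show (0:ℤ) ≤ (k:ℤ) by omega),
        mul_nonneg (mul_nonneg (show (0:ℤ) ≤ (m:ℤ) - k by omega)
          (show (0:ℤ) ≤ (m:ℤ) - k by omega)) (show (0:ℤ) ≤ (k:ℤ) - 1 by omega),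
        mul_pos (show (0:ℤ) < (k:ℤ) by omega) (show (0:ℤ) < (k:ℤ) by omega)]
    · have h1 : ((2*(m:ℤ)) * A) * (2 * (k:ℤ) - 2*m)
          ≤ ((k:ℤ) * (2*(m:ℤ) - k + 1)) * (2 * (k:ℤ) - 2*m) :=
        mul_le_mul_of_nonneg_right (by push_cast at hl ⊢; linarith) (by omega)
      nlinarith [h1,
        mul_nonneg (mul_nonneg (show (0:ℤ) ≤ (k:ℤ) - m by omega)
          (show (0:ℤ) ≤ (k:ℤ) - m by omega)) (show (0:ℤ) ≤ (k:ℤ) - 1 by omega),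
        mul_nonneg (show (0:ℤ) ≤ (m:ℤ) by omega) (show (0:ℤ) ≤ 2*(m:ℤ) - k by omega)]
  · have hd : (2 * m + 1) / 2 = m := by omega
    rw [hd]
    zify [hA1, hAk, hkn, show 1 ≤ k by omega] at hl hr ⊢
    rcases le_or_gt (2 * k) (2 * m + 1) with hc | hc
    · have h1 : ((k:ℤ) * (2*(m:ℤ) + 1 - k + 1) - (2*m+1) + 1) * (2*(m:ℤ) + 1 - 2 * k)
          ≤ ((2*(m:ℤ)+1) * A) * (2*(m:ℤ) + 1 - 2 * k) :=
        mul_le_mul_of_nonneg_right (by push_cast at hr ⊢; linarith) (by omega)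
      nlinarith [h1,
        mul_nonneg (show (0:ℤ) ≤ (m:ℤ) - k by omega) (show (0:ℤ) ≤ (k:ℤ) by omega),
        mul_nonneg (mul_nonneg (show (0:ℤ) ≤ (m:ℤ) - k by omega)
          (show (0:ℤ) ≤ (m:ℤ) - k by omega)) (show (0:ℤ) ≤ (k:ℤ) - 1 by omega),
        mul_pos (show (0:ℤ) < (k:ℤ) by omega) (show (0:ℤ) < (k:ℤ) by omega)]
    · have h1 : ((2*(m:ℤ)+1) * A) * (2 * (k:ℤ) - (2*m+1))
          ≤ ((k:ℤ) * (2*(m:ℤ) + 1 - k + 1)) * (2 * (k:ℤ) - (2*m+1)) :=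
        mul_le_mul_of_nonneg_right (by push_cast at hl ⊢; linarith) (by omega)
      nlinarith [h1,
        mul_nonneg (mul_nonneg (show (0:ℤ) ≤ (k:ℤ) - m - 1 by omega)
          (show (0:ℤ) ≤ (k:ℤ) - m - 1 by omega)) (show (0:ℤ) ≤ (k:ℤ) by omega),
        mul_nonneg (show (0:ℤ) ≤ (m:ℤ) + 1 by omega)
          (show (0:ℤ) ≤ 2*(m:ℤ) + 1 - k by omega)]

lemma phi_decrease {k n : ℕ} (hk : 1 ≤ k) (hkn : k ≤ n) (A : ℕ)
    (M : Fin k → Fin n → Bool) (h1 : P1 M)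
    (hl : n * A ≤ k * (n - k + 1)) (hr : k * (n - k + 1) < n * A + n)
    (i : Fin k) (jmax jmin : Fin n)
    (hmax : ∀ j, colW M j ≤ colW M jmax)
    (hmin : ∀ j, colW M jmin ≤ colW M j)
    (hgap : colW M jmin + 2 ≤ colW M jmax)
    (hMt : M i jmax = true) (hMf : M i jmin = false) :
    Phi A (swapEntries M i jmax jmin) + 1 ≤ Phi A M := by
  obtain ⟨m, rfl⟩ : ∃ m, n = m + 1 := ⟨n - 1, by omega⟩
  have hne : jmax ≠ jmin := by intro h; rw [h] at hgap; omega
  have hS := sum_colW_P1 M h1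
  -- splitting sums
  have hsplit1 : colW M jmin + ∑ j ∈ Finset.univ.erase jmin, colW M j = ∑ j, colW M j :=
    Finset.add_sum_erase _ _ (Finset.mem_univ jmin)
  have hsplit2 : colW M jmax + ∑ j ∈ Finset.univ.erase jmax, colW M j = ∑ j, colW M j :=
    Finset.add_sum_erase _ _ (Finset.mem_univ jmax)
  have hcard1 : (Finset.univ.erase jmin).card = m := by
    rw [Finset.card_erase_of_mem (Finset.mem_univ _), Finset.card_univ, Fintype.card_fin]
    omega
  have hcard2 : (Finset.univ.erase jmax).card = m := by
    rw [Finset.card_erase_of_mem (Finset.mem_univ _), Finset.card_univ, Fintype.card_fin]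
    omega
  have hub : ∑ j ∈ Finset.univ.erase jmin, colW M j ≤ m * colW M jmax := by
    have := Finset.sum_le_card_nsmul (Finset.univ.erase jmin) (fun j => colW M j)
      (colW M jmax) (fun j _ => hmax j)
    rwa [hcard1, smul_eq_mul] at this
  have hlb : m * colW M jmin ≤ ∑ j ∈ Finset.univ.erase jmax, colW M j := by
    have := Finset.card_nsmul_le_sum (Finset.univ.erase jmax) (fun j => colW M j)
      (colW M jmin) (fun j _ => hmin j)
    rwa [hcard2, smul_eq_mul] at this
  have e1 : (m + 1) * A = m * A + A := by ring
  have hwmax : A < colW M jmax := by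
    by_contra hcon
    push_neg at hcon
    have hx : m * colW M jmax ≤ m * A := Nat.mul_le_mul (le_refl m) hcon
    linarith [hl, hS, hsplit1, hub, hgap]
  have hwmin : colW M jmin ≤ A := by
    by_contra hcon
    push_neg at hcon
    have hx : m * (A + 1) ≤ m * colW M jmin := Nat.mul_le_mul (le_refl m) hcon
    have e2 : m * (A + 1) = m * A + m := by ring
    linarith [hr, hS, hsplit2, hlb, hgap]
  -- decompose Phi
  set M' := swapEntries M i jmax jmin with hM'
  have hjm : jmin ∈ Finset.univ.erase jmax :=
    Finset.mem_erase.mpr ⟨hne.symm, Finset.mem_univ _⟩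
  have key : ∀ N : Fin k → Fin (m+1) → Bool, Phi A N =
      gpot A (colW N jmax) + (gpot A (colW N jmin) +
        ∑ j ∈ (Finset.univ.erase jmax).erase jmin, gpot A (colW N j)) := by
    intro N
    rw [Phi, ← Finset.add_sum_erase _ _ (Finset.mem_univ jmax),
      ← Finset.add_sum_erase _ _ hjm]
  rw [key M', key M]
  have hrest : ∑ j ∈ (Finset.univ.erase jmax).erase jmin, gpot A (colW M' j)
      = ∑ j ∈ (Finset.univ.erase jmax).erase jmin, gpot A (colW M j) :=
    Finset.sum_congr rfl (fun j hj => by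
      rw [Finset.mem_erase, Finset.mem_erase] at hj
      rw [hM', colW_swap_other M i jmax jmin j hj.2.1 hj.1])
  have hc1 : colW M' jmax + 1 = colW M jmax := colW_swap_max M i jmax jmin hne hMt
  have hc2 : colW M' jmin = colW M jmin + 1 := colW_swap_min M i jmax jmin hne hMf
  rw [hrest, hc2]
  unfold gpot
  omega

lemma phi_bound {k n : ℕ} (hk : 2 ≤ k) (hkn : k ≤ n) (A : ℕ)
    (hl : n * A ≤ k * (n - k + 1)) (hr : k * (n - k + 1) < n * A + n)
    (M : Fin k → Fin n → Bool) (h1 : P1 M) (h3 : P3 M) :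
    Phi A M ≤ (k - 1) * (n / 2) := by
  have hn : 0 < n := by omega
  have hnS : n ≤ k * (n - k + 1) := by
    calc n = (n - k) + k := by omega
    _ ≤ k * (n - k) + k := by
        have := Nat.le_mul_of_pos_left (n - k) (show 0 < k by omega); omega
    _ = k * (n - k + 1) := by ring
  have hA1 : 1 ≤ A := by
    rcases Nat.eq_zero_or_pos A with h | h
    · subst h; omega
    · exact h
  have hSkn : k * (n - k + 1) < k * n :=
    mul_lt_mul_of_pos_left (show n - k + 1 < n by omega) (show 0 < k by omega)
  have hAk : A + 1 ≤ k := by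
    have : n * A < n * k := by
      apply lt_of_le_of_lt hl
      calc k * (n - k + 1) < k * n := hSkn
      _ = n * k := by ring
    have := Nat.lt_of_mul_lt_mul_left this
    omega
  have hw1 : ∀ j, 1 ≤ colW M j := colW_pos (by omega) hkn M h3
  have hwk : ∀ j, colW M j ≤ k := fun j => colW_le M j
  have hsum : ∑ j, colW M j = k * (n - k + 1) := sum_colW_P1 M h1
  -- sums of k - w and w - 1
  have hs1 : ∑ j, (k - colW M j) = k * (k - 1) := by
    have hadd : ∑ j, ((k - colW M j) + colW M j) = ∑ j : Fin n, k :=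
      Finset.sum_congr rfl (fun j _ => by have := hwk j; omega)
    rw [Finset.sum_add_distrib, hsum] at hadd
    have hconst : ∑ _j : Fin n, k = n * k := by
      rw [Finset.sum_const, Finset.card_univ, Fintype.card_fin, smul_eq_mul]
    rw [hconst] at hadd
    have hid : k * (n - k + 1) + k * (k - 1) = n * k := by
      obtain ⟨e, rfl⟩ : ∃ e, k = e + 1 := ⟨k - 1, by omega⟩
      obtain ⟨d, rfl⟩ : ∃ d, n = (e + 1) + d := ⟨n - (e + 1), by omega⟩
      have e1 : e + 1 + d - (e + 1) = d := by omega
      have e2 : e + 1 - 1 = e := by omega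
      rw [e1, e2]; ring
    omega
  have hs2 : ∑ j, (colW M j - 1) = (k - 1) * (n - k) := by
    have hadd : ∑ j, ((colW M j - 1) + 1) = ∑ j, colW M j :=
      Finset.sum_congr rfl (fun j _ => by have := hw1 j; omega)
    rw [Finset.sum_add_distrib, hsum] at hadd
    have hconst : ∑ _j : Fin n, 1 = n := by simp
    rw [hconst] at hadd
    have hid : (k - 1) * (n - k) + n = k * (n - k + 1) := by
      obtain ⟨e, rfl⟩ : ∃ e, k = e + 1 := ⟨k - 1, by omega⟩
      obtain ⟨d, rfl⟩ : ∃ d, n = (e + 1) + d := ⟨n - (e + 1), by omega⟩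
      have e1 : e + 1 + d - (e + 1) = d := by omega
      have e2 : e + 1 - 1 = e := by omega
      rw [e1, e2]; ring
    omega
  have hstep : (k - 1) * Phi A M ≤
      (A - 1) * (k * (k - 1)) + (k - (A + 1)) * ((k - 1) * (n - k)) := by
    calc (k - 1) * Phi A M = ∑ j, (k - 1) * gpot A (colW M j) := by
          rw [Phi, Finset.mul_sum]
    _ ≤ ∑ j, ((k - colW M j) * (A - 1) + (colW M j - 1) * (k - (A + 1))) :=
          Finset.sum_le_sum (fun j _ => chord k A (colW M j) (hw1 j) (hwk j) hA1 hAk)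
    _ = (∑ j, (k - colW M j)) * (A - 1) + (∑ j, (colW M j - 1)) * (k - (A + 1)) := by
          rw [Finset.sum_add_distrib, ← Finset.sum_mul, ← Finset.sum_mul]
    _ = (A - 1) * (k * (k - 1)) + (k - (A + 1)) * ((k - 1) * (n - k)) := by
          rw [hs1, hs2]; ring
  have hPhi : Phi A M ≤ (A - 1) * k + (k - (A + 1)) * (n - k) := by
    apply Nat.le_of_mul_le_mul_left _ (show 0 < k - 1 by omega)
    calc (k - 1) * Phi A M ≤ (A - 1) * (k * (k - 1)) + (k - (A + 1)) * ((k - 1) * (n - k)) := hstep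
    _ = (k - 1) * ((A - 1) * k + (k - (A + 1)) * (n - k)) := by ring
  exact le_trans hPhi (final_arith k n A hk hkn hA1 hAk hl hr)

end AuxLemmas

theorem stmt_19 (k n : ℕ) (hk : 1 ≤ k) (hkn : k ≤ n)
    (Mseq : ℕ → (Fin k → Fin n → Bool))
    (h0 : P1 (Mseq 0) ∧ P3 (Mseq 0))
    (hstep : ∀ s, ¬ P2 (Mseq s) →
      ∃ (i : Fin k) (jmax jmin : Fin n),
        (∀ j, colW (Mseq s) j ≤ colW (Mseq s) jmax) ∧
        (∀ j, colW (Mseq s) jmin ≤ colW (Mseq s) j) ∧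
        colW (Mseq s) jmin + 2 ≤ colW (Mseq s) jmax ∧
        Mseq s i jmax = true ∧ Mseq s i jmin = false ∧
        Mseq (s + 1) = swapEntries (Mseq s) i jmax jmin ∧
        P1 (Mseq (s + 1)) ∧ P3 (Mseq (s + 1))) :
    ∃ s ≤ (k - 1) * (n / 2), P1 (Mseq s) ∧ P2 (Mseq s) ∧ P3 (Mseq s) := by
  classical
  by_cases hk2 : k = 1
  · subst hk2
    refine ⟨0, by omega, h0.1, ?_, h0.2⟩
    intro j j'
    have hp := colW_pos (le_refl 1) hkn (Mseq 0) h0.2 j'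
    have hle := colW_le (Mseq 0) j
    omega
  · have hk2' : 2 ≤ k := by omega
    have hn : 0 < n := by omega
    set A := k * (n - k + 1) / n with hA
    have hl : n * A ≤ k * (n - k + 1) := by
      rw [hA, mul_comm]; exact Nat.div_mul_le_self _ _
    have hr : k * (n - k + 1) < n * A + n := by
      have hdm := Nat.div_add_mod (k * (n - k + 1)) n
      have hmod : k * (n - k + 1) % n < n := Nat.mod_lt _ hn
      rw [hA]
      linarith [hdm, hmod]
    have key : ∀ s : ℕ, (∀ t, t < s → ¬ P2 (Mseq t)) →
        (P1 (Mseq s) ∧ P3 (Mseq s)) ∧ Phi A (Mseq s) + s ≤ Phi A (Mseq 0) := by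
      intro s
      induction s with
      | zero => intro _; exact ⟨h0, by omega⟩
      | succ s ih =>
        intro h
        have ihs := ih (fun t ht => h t (by omega))
        have hnp2 : ¬ P2 (Mseq s) := h s (by omega)
        obtain ⟨i, jmax, jmin, hmax, hmin, hgap, hMt, hMf, heq, hP1', hP3'⟩ := hstep s hnp2
        have hdec : Phi A (Mseq (s + 1)) + 1 ≤ Phi A (Mseq s) := by
          rw [heq]
          exact phi_decrease hk hkn A (Mseq s) ihs.1.1 hl hr i jmax jmin hmax hmin hgap hMt hMf
        exact ⟨⟨hP1', hP3'⟩, by omega⟩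
    have hex : ∃ s, P2 (Mseq s) := by
      by_contra hcon
      push_neg at hcon
      have := (key (Phi A (Mseq 0) + 1) (fun t _ => hcon t)).2
      omega
    have hP2fn : P2 (Mseq (Nat.find hex)) := Nat.find_spec hex
    have hminimal : ∀ t, t < Nat.find hex → ¬ P2 (Mseq t) := fun t ht => Nat.find_min hex ht
    have hkey := key (Nat.find hex) hminimal
    have hbound : Phi A (Mseq 0) ≤ (k - 1) * (n / 2) :=
      phi_bound hk2' hkn A hl hr (Mseq 0) h0.1 h0.2
    exact ⟨Nat.find hex, by omega, hkey.1.1, hP2fn, hkey.1.2⟩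
end
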